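/- arXiv:2001.01444 — 10 statements merged into one kernel-verified Lean document; each statement's English description precedes it below -/
import Mathlib

section
/- Let f be a C^3 function on an open disk with f_xx f_yy - f_xy^2 = 0 everywhere and f_xx ≠ 0, f_yy ≠ 0 at a point p. Then there exist ε > 0 and a nonzero vector (u,v) with u = f_yy(p), v = -f_xy(p) (up to normalization) such that the line segment t ↦ (p + t(u,v)) for t ∈ (-ε,ε) stays in the disk and the tangent plane of the graph of f is constant along this segment; in particular the graph contains the segment t ↦ (p + t(u,v), f(p) + t(f_x(p)u + f_y(p)v)). -/
open Real Set

noncomputable def pdx (f : ℝ → ℝ → ℝ) : ℝ → ℝ → ℝ := fun x y => deriv (fun s => f s y) x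
noncomputable def pdy (f : ℝ → ℝ → ℝ) : ℝ → ℝ → ℝ := fun x y => deriv (fun s => f x s) y

/-!
Write `F(q) = f q.1 q.2` and `H` for its Hessian. Where `det H = 0`, `H` has rank at most one, so
`H(a,a) H(b,c) = H(a,b) H(a,c)` for all vectors. Fix `a = e₁` (so `H(a,a) = f_xx ≠ 0` near `p`)
and a direction `w` with `H_p(a,w) = 0`, e.g. `w = (f_yy, -f_xy)(p)`. Differentiating
`H(a,a) H(w,w) = H(a,w)²` in the direction `a` and using the symmetry of third derivatives shows
that `h(t) = H_{p+tw}(a,w)` solves a linear ODE `h' = Λ h` with continuous `Λ`. As `h(0) = 0`,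
uniqueness of solutions gives `h ≡ 0`, so by the rank-one identity `H(w,·) = 0` along the
segment: the gradient of `F` is constant on it and `F` is affine on it.
-/

open Function Filter Topology

theorem ContinuousLinearMap.apply_prod_eq {M : Type*} [AddCommGroup M] [Module ℝ M]
    [TopologicalSpace M] (L : ℝ × ℝ →L[ℝ] M) (x : ℝ × ℝ) :
    L x = x.1 • L (1, 0) + x.2 • L (0, 1) := by
  conv_lhs => rw [show x = x.1 • ((1 : ℝ), (0 : ℝ)) + x.2 • ((0 : ℝ), (1 : ℝ)) by ext <;> simp]
  rw [map_add, map_smul, map_smul]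

theorem ContinuousLinearMap.mul_apply_eq_of_det_eq_zero {H : ℝ × ℝ →L[ℝ] ℝ × ℝ →L[ℝ] ℝ}
    (hH : ∀ x y, H x y = H y x)
    (hdet : H (1, 0) (1, 0) * H (0, 1) (0, 1) - H (0, 1) (1, 0) ^ 2 = 0) (a b c : ℝ × ℝ) :
    H a a * H b c = H a b * H a c := by
  have hexp : ∀ x y, H x y = x.1 * y.1 * H (1, 0) (1, 0) + x.2 * y.2 * H (0, 1) (0, 1)
      + (x.1 * y.2 + x.2 * y.1) * H (0, 1) (1, 0) := by
    intro x y
    rw [H.apply_prod_eq x]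
    simp only [add_apply, smul_apply, smul_eq_mul]
    rw [(H (1, 0)).apply_prod_eq y, (H (0, 1)).apply_prod_eq y, hH (1, 0) (0, 1)]
    simp only [smul_eq_mul]
    ring
  rw [hexp a a, hexp b c, hexp a b, hexp a c]
  linear_combination (a.1 * b.2 - a.2 * b.1) * (a.1 * c.2 - a.2 * c.1) * hdet

theorem HasFDerivAt.hasDerivAt_comp_line {E G : Type*} [NormedAddCommGroup E] [NormedSpace ℝ E]
    [NormedAddCommGroup G] [NormedSpace ℝ G] {g : E → G} {g' : E →L[ℝ] G} {p w : E} {t : ℝ}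
    (h : HasFDerivAt g g' (p + t • w)) : HasDerivAt (fun s : ℝ => g (p + s • w)) (g' w) t := by
  have hline : HasDerivAt (fun s : ℝ => p + s • w) w t := by
    simpa using ((hasDerivAt_id t).smul_const w).const_add p
  exact h.comp_hasDerivAt t hline

theorem ContDiffOn.hasDerivAt_comp_line {E G : Type*} [NormedAddCommGroup E] [NormedSpace ℝ E]
    [NormedAddCommGroup G] [NormedSpace ℝ G] {g : E → G} {U : Set E} {p w : E} {n : WithTop ℕ∞}
    (hg : ContDiffOn ℝ n g U) (hU : IsOpen U) (hn : n ≠ 0) {t : ℝ} (ht : p + t • w ∈ U) :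
    HasDerivAt (fun s => g (p + s • w)) (fderiv ℝ g (p + t • w) w) t :=
  ((hg.contDiffAt (hU.mem_nhds ht)).differentiableAt hn).hasFDerivAt.hasDerivAt_comp_line

theorem tendsto_add_smul_nhds_zero {E : Type*} [NormedAddCommGroup E] [NormedSpace ℝ E]
    (p w : E) : Tendsto (fun t : ℝ => p + t • w) (𝓝 0) (𝓝 p) := by
  have hc : Continuous fun t : ℝ => p + t • w := by fun_prop
  simpa using hc.tendsto 0

theorem Filter.Eventually.exists_forall_mem_Icc_add_smul {E : Type*} [NormedAddCommGroup E]
    [NormedSpace ℝ E] {P : E → Prop} {p : E} (h : ∀ᶠ q in 𝓝 p, P q) (w : E) :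
    ∃ ε > (0 : ℝ), ∀ t ∈ Icc (-ε) ε, P (p + t • w) := by
  obtain ⟨ε, hε, hball⟩ :=
    Metric.nhds_basis_closedBall.eventually_iff.mp ((tendsto_add_smul_nhds_zero p w).eventually h)
  refine ⟨ε, hε, fun t ht => hball ?_⟩
  rwa [Real.closedBall_eq_Icc, zero_sub, zero_add]

theorem eqOn_zero_of_hasDerivAt_eq_mul {h Λ : ℝ → ℝ} {a b t₀ : ℝ}
    (hΛ : ContinuousOn Λ (Icc a b)) (hh : ∀ t ∈ Icc a b, HasDerivAt h (Λ t * h t) t)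
    (ht₀ : t₀ ∈ Ioo a b) (h₀ : h t₀ = 0) : EqOn h 0 (Icc a b) := by
  obtain ⟨K, hK⟩ := isCompact_Icc.exists_bound_of_continuousOn hΛ
  have hlip : ∀ t ∈ Ioo a b, LipschitzOnWith K.toNNReal (fun x => Λ t * x) univ := fun t ht =>
    ((lipschitzWith_smul (Λ t)).weaken
      (NNReal.le_toNNReal_of_coe_le (hK t (Ioo_subset_Icc_self ht)))).lipschitzOnWith
  exact ODE_solution_unique_of_mem_Icc (v := fun t x => Λ t * x) (s := fun _ => univ) hlip ht₀
    (HasDerivAt.continuousOn hh) (fun t ht => hh t (Ioo_subset_Icc_self ht))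
    (fun _ _ => mem_univ _) continuousOn_const
    (fun t _ => by simp) (fun _ _ => mem_univ _) h₀

theorem eq_of_hasDerivAt_eq_zero_of_mem_Ioo {G : Type*} [NormedAddCommGroup G] [NormedSpace ℝ G]
    {g : ℝ → G} {a b : ℝ} (hg : ∀ t ∈ Ioo a b, HasDerivAt g 0 t) {s t : ℝ} (hs : s ∈ Ioo a b)
    (ht : t ∈ Ioo a b) : g s = g t :=
  isOpen_Ioo.is_const_of_deriv_eq_zero isPreconnected_Ioo
    (fun x hx => (hg x hx).differentiableAt.differentiableWithinAt) (fun x hx => (hg x hx).deriv)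
    hs ht

noncomputable def hessianDet (F : ℝ × ℝ → ℝ) (q : ℝ × ℝ) : ℝ :=
  fderiv ℝ (fderiv ℝ F) q (1, 0) (1, 0) * fderiv ℝ (fderiv ℝ F) q (0, 1) (0, 1)
    - fderiv ℝ (fderiv ℝ F) q (0, 1) (1, 0) ^ 2

section DegenerateHessian

variable {F : ℝ × ℝ → ℝ} {U : Set (ℝ × ℝ)} {p q w : ℝ × ℝ}

local notation "D²F" => fderiv ℝ (fderiv ℝ F)
local notation "D³F" => fderiv ℝ (fderiv ℝ (fderiv ℝ F))

/- Shortcut instances: without them, instance search fails to find the topology on the type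
`ℝ × ℝ →L[ℝ] ℝ × ℝ →L[ℝ] ℝ × ℝ →L[ℝ] ℝ` of third derivatives. -/
noncomputable local instance : NormedAddCommGroup (ℝ × ℝ →L[ℝ] ℝ × ℝ →L[ℝ] ℝ) := inferInstance
noncomputable local instance : NormedSpace ℝ (ℝ × ℝ →L[ℝ] ℝ × ℝ →L[ℝ] ℝ) := inferInstance

theorem hasDerivAt_hessian_apply_comp_line (hF : ContDiffOn ℝ 3 F U) (hU : IsOpen U) {t : ℝ}
    (ht : p + t • w ∈ U) (a b : ℝ × ℝ) :
    HasDerivAt (fun s => D²F (p + s • w) a b) (D³F (p + t • w) w a b) t := by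
  have hD2 : ContDiffOn ℝ 1 (D²F) U :=
    (hF.fderiv_of_isOpen (m := 2) hU (by norm_num)).fderiv_of_isOpen hU (by norm_num)
  simpa using ((hD2.hasDerivAt_comp_line hU one_ne_zero ht).clm_apply
    (hasDerivAt_const t a)).clm_apply (hasDerivAt_const t b)

theorem hessian_apply_eq_zero_of_hessianDet_eq_zero (hF : ContDiffAt ℝ 2 F p)
    (hdet : hessianDet F p = 0) :
    D²F p (1, 0) (D²F p (0, 1) (0, 1), -D²F p (0, 1) (1, 0)) = 0 := by
  rw [hessianDet] at hdet
  rw [ContinuousLinearMap.apply_prod_eq, hF.isSymmSndFDerivAt (by simp) (1, 0) (0, 1)]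
  simp only [smul_eq_mul]
  linear_combination hdet

theorem hessian_mul_apply_eq (hF : ContDiffOn ℝ 2 F U) (hU : IsOpen U)
    (hdet : EqOn (hessianDet F) 0 U) (hq : q ∈ U) (a b c : ℝ × ℝ) :
    D²F q a a * D²F q b c = D²F q a b * D²F q a c :=
  ContinuousLinearMap.mul_apply_eq_of_det_eq_zero
    ((hF.contDiffAt (hU.mem_nhds hq)).isSymmSndFDerivAt (by simp)) (hdet hq) a b c

theorem fderiv_hessian_mul_apply_eq (hF : ContDiffOn ℝ 3 F U) (hU : IsOpen U)
    (hdet : EqOn (hessianDet F) 0 U) (hq : q ∈ U) (a w : ℝ × ℝ) :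
    D³F q a a a * D²F q w w + D²F q a a * D³F q a w w = 2 * D²F q a w * D³F q a a w := by
  have hq' : q + (0 : ℝ) • a ∈ U := by simpa using hq
  have hd := ((hasDerivAt_hessian_apply_comp_line hF hU hq' a a).mul
    (hasDerivAt_hessian_apply_comp_line hF hU hq' w w)).sub
    ((hasDerivAt_hessian_apply_comp_line hF hU hq' a w).pow 2)
  have hzero : (fun s : ℝ => D²F (q + s • a) a a * D²F (q + s • a) w w - D²F (q + s • a) a w ^ 2)
      =ᶠ[𝓝 0] fun _ => 0 := by
    filter_upwards [(tendsto_add_smul_nhds_zero q a).eventually (hU.mem_nhds hq)] with s hs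
    rw [hessian_mul_apply_eq (hF.of_le (by norm_num)) hU hdet hs a w w]
    ring
  have hd0 := (hd.congr_of_eventuallyEq hzero.symm).unique (hasDerivAt_const 0 (0 : ℝ))
  simp only [zero_smul, add_zero] at hd0
  linear_combination hd0

theorem hasDerivAt_hessian_apply_comp_line_eq_mul (hF : ContDiffOn ℝ 3 F U) (hU : IsOpen U)
    (hdet : EqOn (hessianDet F) 0 U) {a : ℝ × ℝ} {t : ℝ} (ht : p + t • w ∈ U)
    (ha : D²F (p + t • w) a a ≠ 0) :
    HasDerivAt (fun s => D²F (p + s • w) a w)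
      ((2 * D²F (p + t • w) a a * D³F (p + t • w) a a w
          - D³F (p + t • w) a a a * D²F (p + t • w) a w) / D²F (p + t • w) a a ^ 2
        * D²F (p + t • w) a w) t := by
  have hsymm : D³F (p + t • w) w a = D³F (p + t • w) a w :=
    ((hF.fderiv_of_isOpen (m := 2) hU (by norm_num)).contDiffAt (hU.mem_nhds ht)).isSymmSndFDerivAt
      (by simp) w a
  have hid := fderiv_hessian_mul_apply_eq hF hU hdet ht a w
  have hrank := hessian_mul_apply_eq (hF.of_le (by norm_num)) hU hdet ht a w w
  convert hasDerivAt_hessian_apply_comp_line hF hU ht a w using 1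
  rw [hsymm, div_mul_eq_mul_div, div_eq_iff (pow_ne_zero 2 ha)]
  linear_combination D³F (p + t • w) a a a * hrank - D²F (p + t • w) a a * hid

theorem hessian_apply_eq_zero_of_mem_Icc (hF : ContDiffOn ℝ 3 F U) (hU : IsOpen U)
    (hdet : EqOn (hessianDet F) 0 U) {a : ℝ × ℝ} {b : ℝ} (hb : 0 < b)
    (hseg : ∀ t ∈ Icc (-b) b, p + t • w ∈ U ∧ D²F (p + t • w) a a ≠ 0)
    (hw : D²F p a w = 0) {t : ℝ} (ht : t ∈ Icc (-b) b) :
    D²F (p + t • w) w = 0 := by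
  have hD2 : ContDiffOn ℝ 1 (D²F) U :=
    (hF.fderiv_of_isOpen (m := 2) hU (by norm_num)).fderiv_of_isOpen hU (by norm_num)
  have hmaps : MapsTo (fun s : ℝ => p + s • w) (Icc (-b) b) U := fun s hs => (hseg s hs).1
  have hline : ContinuousOn (fun s : ℝ => p + s • w) (Icc (-b) b) := by fun_prop
  have hH : ContinuousOn (fun s => D²F (p + s • w)) (Icc (-b) b) :=
    hD2.continuousOn.comp hline hmaps
  have hT : ContinuousOn (fun s => D³F (p + s • w)) (Icc (-b) b) :=
    (hD2.continuousOn_fderiv_of_isOpen hU le_rfl).comp hline hmaps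
  have hΛ : ContinuousOn (fun s => (2 * D²F (p + s • w) a a * D³F (p + s • w) a a w
      - D³F (p + s • w) a a a * D²F (p + s • w) a w) / D²F (p + s • w) a a ^ 2) (Icc (-b) b) :=
    ContinuousOn.div (by fun_prop) (by fun_prop) fun s hs => pow_ne_zero 2 (hseg s hs).2
  have hzero := eqOn_zero_of_hasDerivAt_eq_mul hΛ
    (fun s hs => hasDerivAt_hessian_apply_comp_line_eq_mul hF hU hdet (hseg s hs).1 (hseg s hs).2)
    ⟨neg_lt_zero.mpr hb, hb⟩ (by simpa using hw)
  refine ContinuousLinearMap.ext fun z => ?_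
  have hrank := hessian_mul_apply_eq (hF.of_le (by norm_num)) hU hdet (hseg t ht).1 a w z
  rw [show D²F (p + t • w) a w = 0 from hzero ht, zero_mul] at hrank
  exact (mul_eq_zero.mp hrank).resolve_left (hseg t ht).2

theorem exists_fderiv_const_on_line (hF : ContDiffOn ℝ 3 F U) (hU : IsOpen U)
    (hdet : EqOn (hessianDet F) 0 U) {a : ℝ × ℝ} (hp : p ∈ U)
    (ha : D²F p a a ≠ 0) (hw : D²F p a w = 0) :
    ∃ ε > 0, ∀ t ∈ Ioo (-ε) ε, p + t • w ∈ U ∧ fderiv ℝ F (p + t • w) = fderiv ℝ F p ∧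
      F (p + t • w) = F p + t * fderiv ℝ F p w := by
  have hD1 : ContDiffOn ℝ 2 (fderiv ℝ F) U := hF.fderiv_of_isOpen hU (by norm_num)
  have hA : ContinuousAt (fun q => D²F q a a) p :=
    (((hD1.fderiv_of_isOpen (m := 1) hU (by norm_num)).continuousOn.continuousAt
      (hU.mem_nhds hp)).clm_apply continuousAt_const).clm_apply continuousAt_const
  obtain ⟨ε, hε, hseg⟩ :=
    ((hU.eventually_mem hp).and (hA.eventually_ne ha)).exists_forall_mem_Icc_add_smul w
  have hIcc : ∀ t ∈ Ioo (-ε) ε, t ∈ Icc (-ε) ε := fun _ ht => Ioo_subset_Icc_self ht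
  have h0 : (0 : ℝ) ∈ Ioo (-ε) ε := ⟨neg_lt_zero.mpr hε, hε⟩
  have hD1_eq (t : ℝ) (ht : t ∈ Ioo (-ε) ε) : fderiv ℝ F (p + t • w) = fderiv ℝ F p := by
    have hderiv (s : ℝ) (hs : s ∈ Ioo (-ε) ε) :
        HasDerivAt (fun s => fderiv ℝ F (p + s • w)) 0 s := by
      rw [← hessian_apply_eq_zero_of_mem_Icc hF hU hdet hε hseg hw (hIcc s hs)]
      exact hD1.hasDerivAt_comp_line hU two_ne_zero (hseg s (hIcc s hs)).1
    simpa using eq_of_hasDerivAt_eq_zero_of_mem_Ioo hderiv ht h0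
  refine ⟨ε, hε, fun t ht => ⟨(hseg t (hIcc t ht)).1, hD1_eq t ht, ?_⟩⟩
  have hderiv (s : ℝ) (hs : s ∈ Ioo (-ε) ε) :
      HasDerivAt (fun s => F (p + s • w) - s * fderiv ℝ F p w) 0 s := by
    have hFs := hF.hasDerivAt_comp_line hU three_ne_zero (hseg s (hIcc s hs)).1
    refine (hFs.sub ((hasDerivAt_id' s).mul_const (fderiv ℝ F p w))).congr_deriv ?_
    rw [hD1_eq s hs, one_mul, sub_self]
  have hF_eq := eq_of_hasDerivAt_eq_zero_of_mem_Ioo hderiv ht h0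
  simp only [zero_smul, add_zero, zero_mul, sub_zero] at hF_eq
  linear_combination hF_eq

end DegenerateHessian

section PartialDerivatives

variable {f : ℝ → ℝ → ℝ} {U : Set (ℝ × ℝ)} {q : ℝ × ℝ}

theorem pdx_eq_of_hasFDerivAt {L : ℝ × ℝ →L[ℝ] ℝ} (h : HasFDerivAt (uncurry f) L q) :
    pdx f q.1 q.2 = L (1, 0) := by
  have hslice := h.comp_hasDerivAt q.1 ((hasDerivAt_id' q.1).prodMk (hasDerivAt_const q.1 q.2))
  exact hslice.deriv

theorem pdy_eq_of_hasFDerivAt {L : ℝ × ℝ →L[ℝ] ℝ} (h : HasFDerivAt (uncurry f) L q) :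
    pdy f q.1 q.2 = L (0, 1) := by
  have hslice := h.comp_hasDerivAt q.2 ((hasDerivAt_const q.2 q.1).prodMk (hasDerivAt_id' q.2))
  exact hslice.deriv

theorem hasFDerivAt_uncurry_pdx (hf : ContDiffOn ℝ 2 (uncurry f) U) (hU : IsOpen U)
    (hq : q ∈ U) :
    HasFDerivAt (uncurry (pdx f)) ((fderiv ℝ (fderiv ℝ (uncurry f)) q).flip (1, 0)) q := by
  have hD1 := (((hf.fderiv_of_isOpen (m := 1) hU (by norm_num)).contDiffAt
    (hU.mem_nhds hq)).differentiableAt one_ne_zero).hasFDerivAt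
  have heq : uncurry (pdx f) =ᶠ[𝓝 q] fun q' => fderiv ℝ (uncurry f) q' (1, 0) := by
    filter_upwards [hU.eventually_mem hq] with q' hq'
    exact pdx_eq_of_hasFDerivAt
      ((hf.contDiffAt (hU.mem_nhds hq')).differentiableAt two_ne_zero).hasFDerivAt
  simpa using (hD1.clm_apply (hasFDerivAt_const (1, 0) q)).congr_of_eventuallyEq heq

theorem hasFDerivAt_uncurry_pdy (hf : ContDiffOn ℝ 2 (uncurry f) U) (hU : IsOpen U)
    (hq : q ∈ U) :
    HasFDerivAt (uncurry (pdy f)) ((fderiv ℝ (fderiv ℝ (uncurry f)) q).flip (0, 1)) q := by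
  have hD1 := (((hf.fderiv_of_isOpen (m := 1) hU (by norm_num)).contDiffAt
    (hU.mem_nhds hq)).differentiableAt one_ne_zero).hasFDerivAt
  have heq : uncurry (pdy f) =ᶠ[𝓝 q] fun q' => fderiv ℝ (uncurry f) q' (0, 1) := by
    filter_upwards [hU.eventually_mem hq] with q' hq'
    exact pdy_eq_of_hasFDerivAt
      ((hf.contDiffAt (hU.mem_nhds hq')).differentiableAt two_ne_zero).hasFDerivAt
  simpa using (hD1.clm_apply (hasFDerivAt_const (0, 1) q)).congr_of_eventuallyEq heq

theorem pdx_pdx_eq_hessian (hf : ContDiffOn ℝ 2 (uncurry f) U) (hU : IsOpen U) (hq : q ∈ U) :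
    pdx (pdx f) q.1 q.2 = fderiv ℝ (fderiv ℝ (uncurry f)) q (1, 0) (1, 0) :=
  (pdx_eq_of_hasFDerivAt (hasFDerivAt_uncurry_pdx hf hU hq)).trans
    (ContinuousLinearMap.flip_apply _ _ _)

theorem pdy_pdx_eq_hessian (hf : ContDiffOn ℝ 2 (uncurry f) U) (hU : IsOpen U) (hq : q ∈ U) :
    pdy (pdx f) q.1 q.2 = fderiv ℝ (fderiv ℝ (uncurry f)) q (0, 1) (1, 0) :=
  (pdy_eq_of_hasFDerivAt (hasFDerivAt_uncurry_pdx hf hU hq)).trans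
    (ContinuousLinearMap.flip_apply _ _ _)

theorem pdy_pdy_eq_hessian (hf : ContDiffOn ℝ 2 (uncurry f) U) (hU : IsOpen U) (hq : q ∈ U) :
    pdy (pdy f) q.1 q.2 = fderiv ℝ (fderiv ℝ (uncurry f)) q (0, 1) (0, 1) :=
  (pdy_eq_of_hasFDerivAt (hasFDerivAt_uncurry_pdy hf hU hq)).trans
    (ContinuousLinearMap.flip_apply _ _ _)

end PartialDerivatives

/-- if `f_xx f_yy - f_xy² = 0` on an open disk and `f_xx, f_yy` do not vanish
at `p`, then along the direction `(u,v) = (f_yy(p), -f_xy(p))` the tangent plane of the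
graph of `f` is constant on a small segment through `p`, and the graph contains that
segment. -/
theorem stmt_2 (f : ℝ → ℝ → ℝ) (c : ℝ × ℝ) (ρ : ℝ)
    (hf : ContDiffOn ℝ 3 (fun q : ℝ × ℝ => f q.1 q.2) (Metric.ball c ρ))
    (hK : ∀ q ∈ Metric.ball c ρ,
      pdx (pdx f) q.1 q.2 * pdy (pdy f) q.1 q.2 - (pdy (pdx f) q.1 q.2) ^ 2 = 0)
    (p : ℝ × ℝ) (hp : p ∈ Metric.ball c ρ)
    (hxx : pdx (pdx f) p.1 p.2 ≠ 0) (hyy : pdy (pdy f) p.1 p.2 ≠ 0) :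
    ∃ ε > 0, ∃ u v : ℝ, u = pdy (pdy f) p.1 p.2 ∧ v = -(pdy (pdx f) p.1 p.2) ∧
      (u, v) ≠ ((0 : ℝ), (0 : ℝ)) ∧
      ∀ t ∈ Ioo (-ε) ε,
        (p.1 + t * u, p.2 + t * v) ∈ Metric.ball c ρ ∧
        pdx f (p.1 + t * u) (p.2 + t * v) = pdx f p.1 p.2 ∧
        pdy f (p.1 + t * u) (p.2 + t * v) = pdy f p.1 p.2 ∧
        f (p.1 + t * u) (p.2 + t * v)
          = f p.1 p.2 + t * (pdx f p.1 p.2 * u + pdy f p.1 p.2 * v) := by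
  have hU : IsOpen (Metric.ball c ρ) := Metric.isOpen_ball
  have hF : ContDiffOn ℝ 3 (uncurry f) (Metric.ball c ρ) := hf
  have hF2 : ContDiffOn ℝ 2 (uncurry f) (Metric.ball c ρ) := hF.of_le (by norm_num)
  have hD1 {q} (hq : q ∈ Metric.ball c ρ) : HasFDerivAt (uncurry f) (fderiv ℝ (uncurry f) q) q :=
    ((hF2.contDiffAt (hU.mem_nhds hq)).differentiableAt two_ne_zero).hasFDerivAt
  have hdet : EqOn (hessianDet (uncurry f)) 0 (Metric.ball c ρ) := fun q hq => by
    rw [Pi.zero_apply, hessianDet, ← pdx_pdx_eq_hessian hF2 hU hq, ← pdy_pdx_eq_hessian hF2 hU hq,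
      ← pdy_pdy_eq_hessian hF2 hU hq]
    exact hK q hq
  have hw := hessian_apply_eq_zero_of_hessianDet_eq_zero (hF2.contDiffAt (hU.mem_nhds hp)) (hdet hp)
  rw [← pdy_pdy_eq_hessian hF2 hU hp, ← pdy_pdx_eq_hessian hF2 hU hp] at hw
  obtain ⟨ε, hε, hline⟩ :=
    exists_fderiv_const_on_line hF hU hdet hp (pdx_pdx_eq_hessian hF2 hU hp ▸ hxx) hw
  refine ⟨ε, hε, _, _, rfl, rfl, fun h => hyy (congrArg Prod.fst h), fun t ht => ?_⟩
  obtain ⟨hmem, hgrad, hval⟩ := hline t ht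
  refine ⟨hmem, (pdx_eq_of_hasFDerivAt (hD1 hmem)).trans ?_,
    (pdy_eq_of_hasFDerivAt (hD1 hmem)).trans ?_, hval.trans ?_⟩
  · rw [hgrad, pdx_eq_of_hasFDerivAt (hD1 hp)]
  · rw [hgrad, pdy_eq_of_hasFDerivAt (hD1 hp)]
  · rw [ContinuousLinearMap.apply_prod_eq, pdx_eq_of_hasFDerivAt (hD1 hp),
      pdy_eq_of_hasFDerivAt (hD1 hp), smul_eq_mul, smul_eq_mul, mul_comm (pdy (pdy f) p.1 p.2),
      mul_comm (-pdy (pdx f) p.1 p.2)]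
    rfl
end

section
/- Let f be C^3 at a point. The system { f_xx u² + 2 f_xy u v + f_yy v² = 0, f_xxx u³ + 3 f_xxy u² v + 3 f_xyy u v² + f_yyy v³ = 0 } has a common nonzero real solution (u,v) if and only if f_xx f_yy - f_xy² ≤ 0 and the resultant expression f_yy³ f_xxx² + 6 f_yy f_xxx f_yyy f_xy f_xx - 6 f_yy² f_xxx f_xyy f_xx - 6 f_yyy f_xy f_xx² f_xyy + 9 f_yy f_xyy² f_xx² - 6 f_xy f_yy² f_xxy f_xxx + 12 f_xy² f_xxy f_yyy f_xx - 18 f_xy f_yy f_xxy f_xyy f_xx + 12 f_yy f_xyy f_xy² f_xxx - 8 f_yyy f_xy³ f_xxx + 9 f_xx f_yy² f_xxy² - 6 f_yy f_xxy f_yyy f_xx² + f_yyy² f_xx³ = 0 holds, provided not all second and third partial derivatives of f vanish simultaneously in a degenerate way (i.e. the two binary forms are not both identically zero). -/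
/-!
Over ℝ, a binary quadratic form `a u² + 2b uv + c v²` that is not identically zero has a
nontrivial real zero exactly when `ac - b² ≤ 0`, and then it splits into real linear factors
`k (v₁ u - u₁ v)(v₂ u - u₂ v)`. In terms of such a splitting the resultant with a cubic form `C`
is `k³ C(u₁, v₁) C(u₂, v₂)`, and the real zeros of the quadratic form are the multiples of
`(u₁, v₁)` and `(u₂, v₂)`; since `C` is homogeneous, both directions follow.
-/

def quadForm (a b c u v : ℝ) : ℝ := a * u ^ 2 + 2 * b * u * v + c * v ^ 2

def cubicForm (p q r s u v : ℝ) : ℝ :=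
  p * u ^ 3 + 3 * q * u ^ 2 * v + 3 * r * u * v ^ 2 + s * v ^ 3

def quadCubicResultant (a b c p q r s : ℝ) : ℝ :=
  c ^ 3 * p ^ 2 + 6 * c * p * s * b * a
    - 6 * c ^ 2 * p * r * a - 6 * s * b * a ^ 2 * r
    + 9 * c * r ^ 2 * a ^ 2 - 6 * b * c ^ 2 * q * p
    + 12 * b ^ 2 * q * s * a - 18 * b * c * q * r * a
    + 12 * c * r * b ^ 2 * p - 8 * s * b ^ 3 * p
    + 9 * a * c ^ 2 * q ^ 2 - 6 * c * q * s * a ^ 2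
    + s ^ 2 * a ^ 3

/-- The coefficients of `k (v₁ u - u₁ v)(v₂ u - u₂ v)`. -/
def IsQuadFactorization (a b c k u₁ v₁ u₂ v₂ : ℝ) : Prop :=
  a = k * v₁ * v₂ ∧ 2 * b = -(k * (v₁ * u₂ + u₁ * v₂)) ∧ c = k * u₁ * u₂

section

variable {a b c p q r s u v : ℝ}

theorem cubicForm_smul (t : ℝ) :
    cubicForm p q r s (t * u) (t * v) = t ^ 3 * cubicForm p q r s u v := by
  unfold cubicForm; ring

theorem exists_smul_of_cross_eq_zero {u₁ v₁ : ℝ} (huv : (u, v) ≠ (0, 0))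
    (h : v₁ * u - u₁ * v = 0) : ∃ t, u₁ = t * u ∧ v₁ = t * v := by
  rcases ne_or_eq u 0 with hu | rfl
  · exact ⟨u₁ / u, by field_simp, by field_simp; linarith⟩
  · have hv : v ≠ 0 := by simpa using huv
    refine ⟨v₁ / v, ?_, by field_simp⟩
    simpa [hv] using h

theorem cubicForm_eq_zero_of_cross_eq_zero {u₁ v₁ : ℝ} (huv : (u, v) ≠ (0, 0))
    (h : v₁ * u - u₁ * v = 0) (hC : cubicForm p q r s u v = 0) :
    cubicForm p q r s u₁ v₁ = 0 := by
  obtain ⟨t, rfl, rfl⟩ := exists_smul_of_cross_eq_zero huv h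
  rw [cubicForm_smul, hC, mul_zero]

theorem disc_nonpos_of_quadForm_eq_zero (huv : (u, v) ≠ (0, 0))
    (hQ : quadForm a b c u v = 0) : a * c - b ^ 2 ≤ 0 := by
  by_contra! hdisc
  have ha : a ≠ 0 := by rintro rfl; nlinarith [sq_nonneg b]
  -- completing the square: `a Q(u, v) = (a u + b v)² + (ac - b²) v²`
  have hsq : (a * u + b * v) ^ 2 + (a * c - b ^ 2) * v ^ 2 = 0 := by
    unfold quadForm at hQ; linear_combination a * hQ
  have hv : v = 0 := by
    have : v ^ 2 = 0 := by nlinarith [sq_nonneg (a * u + b * v), sq_nonneg v]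
    simpa using this
  subst hv
  have hu : u = 0 := by simpa [ha] using hsq
  exact huv (by simp [hu])

variable {k u₁ v₁ u₂ v₂ : ℝ}

theorem IsQuadFactorization.quadForm_eq (hf : IsQuadFactorization a b c k u₁ v₁ u₂ v₂) :
    quadForm a b c u v = k * (v₁ * u - u₁ * v) * (v₂ * u - u₂ * v) := by
  obtain ⟨ha, hb, hc⟩ := hf
  unfold quadForm
  linear_combination u ^ 2 * ha + u * v * hb + v ^ 2 * hc

theorem IsQuadFactorization.resultant_eq (hf : IsQuadFactorization a b c k u₁ v₁ u₂ v₂) :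
    quadCubicResultant a b c p q r s =
      k ^ 3 * cubicForm p q r s u₁ v₁ * cubicForm p q r s u₂ v₂ := by
  obtain ⟨rfl, hb, rfl⟩ := hf
  obtain rfl : b = -(k * (v₁ * u₂ + u₁ * v₂)) / 2 := by linarith
  unfold quadCubicResultant cubicForm
  ring

theorem exists_isQuadFactorization (hQ : ¬(a = 0 ∧ b = 0 ∧ c = 0))
    (hdisc : a * c - b ^ 2 ≤ 0) :
    ∃ k u₁ v₁ u₂ v₂, k ≠ 0 ∧ (u₁, v₁) ≠ (0, 0) ∧ (u₂, v₂) ≠ (0, 0) ∧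
      IsQuadFactorization a b c k u₁ v₁ u₂ v₂ := by
  rcases eq_or_ne a 0 with rfl | ha
  · -- `2b uv + c v² = -(0 · u - 1 · v)(2b u + c v)`
    have hbc : (-c, 2 * b) ≠ (0, 0) := by
      intro h
      simp only [Prod.mk.injEq, neg_eq_zero, mul_eq_zero, two_ne_zero, false_or] at h
      exact hQ ⟨rfl, h.2, h.1⟩
    exact ⟨-1, 1, 0, -c, 2 * b, by norm_num, by simp, hbc, by ring, by ring, by ring⟩
  · set t := √(b ^ 2 - a * c)
    have ht : t ^ 2 = b ^ 2 - a * c := Real.sq_sqrt (by linarith)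
    refine ⟨a⁻¹, -b + t, a, -b - t, a, inv_ne_zero ha, by simp [ha], by simp [ha], ?_, ?_, ?_⟩
    · field_simp
    · field_simp; ring
    · field_simp; linear_combination ht

theorem exists_common_zero_iff (hQ : ¬(a = 0 ∧ b = 0 ∧ c = 0)) :
    (∃ u v : ℝ, (u, v) ≠ (0, 0) ∧ quadForm a b c u v = 0 ∧ cubicForm p q r s u v = 0) ↔
      a * c - b ^ 2 ≤ 0 ∧ quadCubicResultant a b c p q r s = 0 := by
  constructor
  · rintro ⟨u, v, huv, hQuv, hCuv⟩
    have hdisc := disc_nonpos_of_quadForm_eq_zero huv hQuv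
    obtain ⟨k, u₁, v₁, u₂, v₂, hk, -, -, hf⟩ := exists_isQuadFactorization hQ hdisc
    refine ⟨hdisc, ?_⟩
    rw [hf.quadForm_eq, mul_assoc, mul_eq_zero, mul_eq_zero] at hQuv
    rw [hf.resultant_eq, mul_eq_zero, mul_eq_zero]
    rcases hQuv with hk0 | h₁ | h₂
    · exact absurd hk0 hk
    · exact Or.inl (Or.inr (cubicForm_eq_zero_of_cross_eq_zero huv h₁ hCuv))
    · exact Or.inr (cubicForm_eq_zero_of_cross_eq_zero huv h₂ hCuv)
  · rintro ⟨hdisc, hR⟩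
    obtain ⟨k, u₁, v₁, u₂, v₂, hk, h₁, h₂, hf⟩ := exists_isQuadFactorization hQ hdisc
    rw [hf.resultant_eq, mul_eq_zero, mul_eq_zero] at hR
    rcases hR with (hk0 | hC₁) | hC₂
    · exact absurd (pow_eq_zero_iff three_ne_zero |>.mp hk0) hk
    · exact ⟨u₁, v₁, h₁, by rw [hf.quadForm_eq]; ring, hC₁⟩
    · exact ⟨u₂, v₂, h₂, by rw [hf.quadForm_eq]; ring, hC₂⟩

end

/-- the binary quadratic and cubic forms built from the second and third
order partial derivatives at a point have a common nonzero real root if and only if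
the Gaussian-curvature discriminant is nonpositive and the resultant vanishes
(assuming the quadratic form is not identically zero). -/
theorem stmt_4 (fxx fxy fyy fxxx fxxy fxyy fyyy : ℝ)
    (hQ : ¬(fxx = 0 ∧ fxy = 0 ∧ fyy = 0)) :
    (∃ u v : ℝ, (u, v) ≠ ((0 : ℝ), (0 : ℝ)) ∧
        fxx * u ^ 2 + 2 * fxy * u * v + fyy * v ^ 2 = 0 ∧
        fxxx * u ^ 3 + 3 * fxxy * u ^ 2 * v + 3 * fxyy * u * v ^ 2 + fyyy * v ^ 3 = 0)
    ↔ (fxx * fyy - fxy ^ 2 ≤ 0 ∧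
        fyy ^ 3 * fxxx ^ 2 + 6 * fyy * fxxx * fyyy * fxy * fxx
          - 6 * fyy ^ 2 * fxxx * fxyy * fxx - 6 * fyyy * fxy * fxx ^ 2 * fxyy
          + 9 * fyy * fxyy ^ 2 * fxx ^ 2 - 6 * fxy * fyy ^ 2 * fxxy * fxxx
          + 12 * fxy ^ 2 * fxxy * fyyy * fxx - 18 * fxy * fyy * fxxy * fxyy * fxx
          + 12 * fyy * fxyy * fxy ^ 2 * fxxx - 8 * fyyy * fxy ^ 3 * fxxx
          + 9 * fxx * fyy ^ 2 * fxxy ^ 2 - 6 * fyy * fxxy * fyyy * fxx ^ 2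
          + fyyy ^ 2 * fxx ^ 3 = 0) :=
  exists_common_zero_iff hQ
end

section
/- Let f be C^3 on an open disk with f_xx f_yy - f_xy² < 0 everywhere, and suppose (u,v) : D → ℝ² is a C^1 vector field with u² + v² = 1 satisfying both f_xx u² + 2 f_xy uv + f_yy v² = 0 and f_xxx u³ + 3 f_xxy u²v + 3 f_xyy uv² + f_yyy v³ = 0 at every point. Then every integral curve (x(t), y(t)) of the field (i.e., with x'(t) = u(x(t),y(t)), y'(t) = v(x(t),y(t))) is a straight line segment, and t ↦ f(x(t), y(t)) is an affine function of t; hence the graph of f contains a line segment through each point. -/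
open Real Set

/-!
Write `H` for the Hessian of `f` and `w = (u, v)`. Along an integral curve, differentiating the
first equation `H(w, w) = 0` gives `D³f(w, w, w) + 2 H(w, w') = 0`, and the cubic term vanishes by
the second equation, so `H(w, w') = 0`; also `w' ⊥ w` because `|w| = 1`. As `H` is nondegenerate
and `w` is `H`-isotropic, `H(w, ·)` does not vanish on `w^⊥`, hence `w' = 0`: the field is constant
along the curve, which is therefore a line traversed with a fixed asymptotic velocity `w₀`. Along
that line the derivative of `f` is `w₀ · ∇f`, whose own derivative is `H(w₀, w₀) = 0`, so `f` is
affine there.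
-/

open Filter Topology Function

lemma ContinuousLinearMap.map_pair_eq {E : Type*} [NormedAddCommGroup E] [NormedSpace ℝ E]
    (L : ℝ × ℝ →L[ℝ] E) (a b : ℝ) : L (a, b) = a • L (1, 0) + b • L (0, 1) := by
  rw [← map_smul, ← map_smul, ← map_add]
  simp

section PartialDerivatives

variable {g : ℝ → ℝ → ℝ} {B : Set (ℝ × ℝ)}

lemma hasDerivAt_uncurry_comp_fderiv {X Y : ℝ → ℝ} {a b t : ℝ}
    (hg : DifferentiableAt ℝ (uncurry g) (X t, Y t)) (hX : HasDerivAt X a t)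
    (hY : HasDerivAt Y b t) :
    HasDerivAt (fun s => g (X s) (Y s)) (fderiv ℝ (uncurry g) (X t, Y t) (a, b)) t :=
  hg.hasFDerivAt.comp_hasDerivAt (f := fun s => (X s, Y s)) t (hX.prodMk hY)

lemma pdx_eq_fderiv {x y : ℝ} (hg : DifferentiableAt ℝ (uncurry g) (x, y)) :
    pdx g x y = fderiv ℝ (uncurry g) (x, y) (1, 0) :=
  (hasDerivAt_uncurry_comp_fderiv hg (hasDerivAt_id x) (hasDerivAt_const x y)).deriv

lemma pdy_eq_fderiv {x y : ℝ} (hg : DifferentiableAt ℝ (uncurry g) (x, y)) :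
    pdy g x y = fderiv ℝ (uncurry g) (x, y) (0, 1) :=
  (hasDerivAt_uncurry_comp_fderiv hg (hasDerivAt_const y x) (hasDerivAt_id y)).deriv

lemma HasDerivAt.uncurry_comp {X Y : ℝ → ℝ} {a b t : ℝ}
    (hg : DifferentiableAt ℝ (uncurry g) (X t, Y t)) (hX : HasDerivAt X a t)
    (hY : HasDerivAt Y b t) :
    HasDerivAt (fun s => g (X s) (Y s)) (a * pdx g (X t) (Y t) + b * pdy g (X t) (Y t)) t := by
  have h := hasDerivAt_uncurry_comp_fderiv hg hX hY
  rwa [ContinuousLinearMap.map_pair_eq, ← pdx_eq_fderiv hg, ← pdy_eq_fderiv hg] at h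

lemma eqOn_uncurry_pdx {n : WithTop ℕ∞} (hg : ContDiffOn ℝ n (uncurry g) B) (hB : IsOpen B)
    (hn : n ≠ 0) : EqOn (uncurry (pdx g)) (fun q => fderiv ℝ (uncurry g) q (1, 0)) B :=
  fun _ hq => pdx_eq_fderiv ((hg.differentiableOn hn).differentiableAt (hB.mem_nhds hq))

lemma eqOn_uncurry_pdy {n : WithTop ℕ∞} (hg : ContDiffOn ℝ n (uncurry g) B) (hB : IsOpen B)
    (hn : n ≠ 0) : EqOn (uncurry (pdy g)) (fun q => fderiv ℝ (uncurry g) q (0, 1)) B :=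
  fun _ hq => pdy_eq_fderiv ((hg.differentiableOn hn).differentiableAt (hB.mem_nhds hq))

lemma ContDiffOn.uncurry_pdx {n : WithTop ℕ∞} (hg : ContDiffOn ℝ (n + 1) (uncurry g) B)
    (hB : IsOpen B) : ContDiffOn ℝ n (uncurry (pdx g)) B :=
  ((hg.fderiv_of_isOpen hB le_rfl).clm_apply contDiffOn_const).congr
    (eqOn_uncurry_pdx hg hB (by simp))

lemma ContDiffOn.uncurry_pdy {n : WithTop ℕ∞} (hg : ContDiffOn ℝ (n + 1) (uncurry g) B)
    (hB : IsOpen B) : ContDiffOn ℝ n (uncurry (pdy g)) B :=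
  ((hg.fderiv_of_isOpen hB le_rfl).clm_apply contDiffOn_const).congr
    (eqOn_uncurry_pdy hg hB (by simp))

lemma pdx_pdy_comm (hg : ContDiffOn ℝ 2 (uncurry g) B) (hB : IsOpen B) {x y : ℝ}
    (hq : (x, y) ∈ B) : pdx (pdy g) x y = pdy (pdx g) x y := by
  have hnhds := hB.mem_nhds hq
  have hD2 : DifferentiableAt ℝ (fderiv ℝ (uncurry g)) (x, y) :=
    ((hg.fderiv_of_isOpen hB (m := 1) (by norm_num)).differentiableOn one_ne_zero).differentiableAt
      hnhds
  have hg' : ContDiffOn ℝ (1 + 1) (uncurry g) B := hg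
  rw [pdx_eq_fderiv ((hg'.uncurry_pdy hB).differentiableOn one_ne_zero |>.differentiableAt hnhds),
    pdy_eq_fderiv ((hg'.uncurry_pdx hB).differentiableOn one_ne_zero |>.differentiableAt hnhds),
    ((eqOn_uncurry_pdy hg hB two_ne_zero).eventuallyEq_of_mem hnhds).fderiv_eq,
    ((eqOn_uncurry_pdx hg hB two_ne_zero).eventuallyEq_of_mem hnhds).fderiv_eq,
    fderiv_clm_apply hD2 (differentiableAt_const _),
    fderiv_clm_apply hD2 (differentiableAt_const _)]
  simpa using ((hg.contDiffAt hnhds).isSymmSndFDerivAt (by simp)) (1, 0) (0, 1)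

lemma pdy_congr {g₁ g₂ : ℝ → ℝ → ℝ} (hB : IsOpen B) (h : ∀ q ∈ B, g₁ q.1 q.2 = g₂ q.1 q.2)
    {x y : ℝ} (hq : (x, y) ∈ B) : pdy g₁ x y = pdy g₂ x y := by
  have hslice : ∀ᶠ s in 𝓝 y, (x, s) ∈ B :=
    (Continuous.prodMk_right x).continuousAt.preimage_mem_nhds (hB.mem_nhds hq)
  exact EventuallyEq.deriv_eq (hslice.mono fun s hs => h _ hs)

lemma hasDerivAt_directional_pd_comp (hg : ContDiffOn ℝ 2 (uncurry g) B) (hB : IsOpen B)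
    {X Y : ℝ → ℝ} {a b t : ℝ} (hq : (X t, Y t) ∈ B) (hX : HasDerivAt X a t)
    (hY : HasDerivAt Y b t) :
    HasDerivAt (fun s => a * pdx g (X s) (Y s) + b * pdy g (X s) (Y s))
      (pdx (pdx g) (X t) (Y t) * a ^ 2 + 2 * pdy (pdx g) (X t) (Y t) * a * b
        + pdy (pdy g) (X t) (Y t) * b ^ 2) t := by
  have hg' : ContDiffOn ℝ (1 + 1) (uncurry g) B := hg
  have hx := HasDerivAt.uncurry_comp ((hg'.uncurry_pdx hB).differentiableOn one_ne_zero
    |>.differentiableAt (hB.mem_nhds hq)) hX hY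
  have hy := HasDerivAt.uncurry_comp ((hg'.uncurry_pdy hB).differentiableOn one_ne_zero
    |>.differentiableAt (hB.mem_nhds hq)) hX hY
  refine ((hx.const_mul a).add (hy.const_mul b)).congr_deriv ?_
  rw [pdx_pdy_comm hg hB hq]
  ring

end PartialDerivatives

lemma eq_add_mul_sub_of_hasDerivAt {s : Set ℝ} (hs : IsOpen s) (hs' : IsPreconnected s)
    {g : ℝ → ℝ} {c : ℝ} (hg : ∀ t ∈ s, HasDerivAt g c t) {a t : ℝ} (ha : a ∈ s) (ht : t ∈ s) :
    g t = g a + c * (t - a) := by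
  have hconst : ∀ r ∈ s, HasDerivAt (fun r => g r - c * r) 0 r := fun r hr =>
    ((hg r hr).sub ((hasDerivAt_id r).const_mul c)).congr_deriv (by simp)
  have := hs.is_const_of_deriv_eq_zero hs'
    (fun r hr => (hconst r hr).differentiableAt.differentiableWithinAt)
    (fun r hr => (hconst r hr).deriv) ht ha
  linarith

lemma eq_zero_of_isotropic_of_orthogonal {a b c U V dU dV : ℝ} (hdet : a * c - b ^ 2 < 0)
    (hiso : a * U ^ 2 + 2 * b * U * V + c * V ^ 2 = 0) (hunit : U ^ 2 + V ^ 2 = 1)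
    (horth : U * dU + V * dV = 0) (hpolar : (a * U + b * V) * dU + (b * U + c * V) * dV = 0) :
    dU = 0 ∧ dV = 0 := by
  set P := a * U + b * V
  set Q := b * U + c * V
  have hPQ : P * U + Q * V = 0 := by linear_combination hiso
  have hdet' : P * V - Q * U ≠ 0 := by
    intro h
    have hP : P = 0 := by linear_combination U * hPQ + V * h - P * hunit
    have hQ : Q = 0 := by linear_combination V * hPQ - U * h - Q * hunit
    have hU : (a * c - b ^ 2) * U = 0 := by linear_combination c * hP - b * hQ
    have hV : (a * c - b ^ 2) * V = 0 := by linear_combination a * hQ - b * hP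
    rw [(mul_eq_zero.mp hU).resolve_left hdet.ne, (mul_eq_zero.mp hV).resolve_left hdet.ne] at hunit
    norm_num at hunit
  have hU : (P * V - Q * U) * dU = 0 := by linear_combination V * hpolar - Q * horth
  have hV : (P * V - Q * U) * dV = 0 := by linear_combination P * horth - U * hpolar
  exact ⟨(mul_eq_zero.mp hU).resolve_left hdet', (mul_eq_zero.mp hV).resolve_left hdet'⟩

section AsymptoticField

variable {f : ℝ → ℝ → ℝ} {u v : ℝ × ℝ → ℝ} {B : Set (ℝ × ℝ)}

theorem hasDerivAt_field_comp_eq_zero (hB : IsOpen B) (hf : ContDiffOn ℝ 3 (uncurry f) B)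
    (hK : ∀ q ∈ B, pdx (pdx f) q.1 q.2 * pdy (pdy f) q.1 q.2 - (pdy (pdx f) q.1 q.2) ^ 2 < 0)
    (hu : DifferentiableOn ℝ u B) (hv : DifferentiableOn ℝ v B)
    (hunit : ∀ q ∈ B, (u q) ^ 2 + (v q) ^ 2 = 1)
    (heq1 : ∀ q ∈ B,
      pdx (pdx f) q.1 q.2 * (u q) ^ 2 + 2 * pdy (pdx f) q.1 q.2 * u q * v q
        + pdy (pdy f) q.1 q.2 * (v q) ^ 2 = 0)
    (heq2 : ∀ q ∈ B,
      pdx (pdx (pdx f)) q.1 q.2 * (u q) ^ 3 + 3 * pdy (pdx (pdx f)) q.1 q.2 * (u q) ^ 2 * v q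
        + 3 * pdy (pdy (pdx f)) q.1 q.2 * u q * (v q) ^ 2
        + pdy (pdy (pdy f)) q.1 q.2 * (v q) ^ 3 = 0)
    {X Y : ℝ → ℝ} {t : ℝ} (hγB : ∀ᶠ s in 𝓝 t, (X s, Y s) ∈ B)
    (hX : HasDerivAt X (u (X t, Y t)) t) (hY : HasDerivAt Y (v (X t, Y t)) t) :
    HasDerivAt (fun s => u (X s, Y s)) 0 t ∧ HasDerivAt (fun s => v (X s, Y s)) 0 t := by
  have hq : (X t, Y t) ∈ B := hγB.self_of_nhds
  have hqn := hB.mem_nhds hq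
  set dU := fderiv ℝ u (X t, Y t) (u (X t, Y t), v (X t, Y t))
  set dV := fderiv ℝ v (X t, Y t) (u (X t, Y t), v (X t, Y t))
  have hU : HasDerivAt (fun s => u (X s, Y s)) dU t :=
    (hu.differentiableAt hqn).hasFDerivAt.comp_hasDerivAt t (hX.prodMk hY)
  have hV : HasDerivAt (fun s => v (X s, Y s)) dV t :=
    (hv.differentiableAt hqn).hasFDerivAt.comp_hasDerivAt t (hX.prodMk hY)
  have hf' : ContDiffOn ℝ (1 + 1 + 1) (uncurry f) B := hf
  have hfx := hf'.uncurry_pdx hB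
  have hfy := hf'.uncurry_pdy hB
  have hA := HasDerivAt.uncurry_comp ((hfx.uncurry_pdx hB).differentiableOn one_ne_zero
    |>.differentiableAt hqn) hX hY
  have hBxy := HasDerivAt.uncurry_comp ((hfx.uncurry_pdy hB).differentiableOn one_ne_zero
    |>.differentiableAt hqn) hX hY
  have hC := HasDerivAt.uncurry_comp ((hfy.uncurry_pdy hB).differentiableOn one_ne_zero
    |>.differentiableAt hqn) hX hY
  have hxyx : pdx (pdy (pdx f)) (X t) (Y t) = pdy (pdx (pdx f)) (X t) (Y t) :=
    pdx_pdy_comm hfx hB hq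
  have hxyy : pdx (pdy (pdy f)) (X t) (Y t) = pdy (pdy (pdx f)) (X t) (Y t) :=
    (pdx_pdy_comm hfy hB hq).trans
      (pdy_congr hB (fun p hp => pdx_pdy_comm hf'.of_succ hB hp) hq)
  have horth : u (X t, Y t) * dU + v (X t, Y t) * dV = 0 := by
    have h := ((hU.pow 2).add (hV.pow 2)).unique
      ((hasDerivAt_const t 1).congr_of_eventuallyEq (hγB.mono fun s hs => hunit _ hs))
    norm_num at h
    linear_combination h / 2
  -- differentiating the first asymptotic equation, the third-order terms vanish by the second
  have hpolar : (pdx (pdx f) (X t) (Y t) * u (X t, Y t) + pdy (pdx f) (X t) (Y t) * v (X t, Y t))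
        * dU + (pdy (pdx f) (X t) (Y t) * u (X t, Y t) + pdy (pdy f) (X t) (Y t) * v (X t, Y t))
        * dV = 0 := by
    have h := (((hA.mul (hU.pow 2)).add (((hBxy.const_mul 2).mul hU).mul hV)).add
      (hC.mul (hV.pow 2))).unique
      ((hasDerivAt_const t 0).congr_of_eventuallyEq (hγB.mono fun s hs => heq1 _ hs))
    rw [hxyx, hxyy] at h
    norm_num at h
    linear_combination h / 2 - heq2 _ hq / 2
  obtain ⟨hdU, hdV⟩ :=
    eq_zero_of_isotropic_of_orthogonal (hK _ hq) (heq1 _ hq) (hunit _ hq) horth hpolar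
  exact ⟨hdU ▸ hU, hdV ▸ hV⟩

end AsymptoticField

/-- given a unit `C¹` solution field `(u,v)` of the two asymptotic
equations on a disk where the Hessian determinant is negative, every integral curve of
the field is a straight line segment, and `f` is affine along it. -/
theorem stmt_6 (f : ℝ → ℝ → ℝ) (c : ℝ × ℝ) (ρ : ℝ)
    (hf : ContDiffOn ℝ 3 (fun q : ℝ × ℝ => f q.1 q.2) (Metric.ball c ρ))
    (hK : ∀ q ∈ Metric.ball c ρ,
      pdx (pdx f) q.1 q.2 * pdy (pdy f) q.1 q.2 - (pdy (pdx f) q.1 q.2) ^ 2 < 0)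
    (u v : ℝ × ℝ → ℝ)
    (hu : ContDiffOn ℝ 1 u (Metric.ball c ρ)) (hv : ContDiffOn ℝ 1 v (Metric.ball c ρ))
    (hunit : ∀ q ∈ Metric.ball c ρ, (u q) ^ 2 + (v q) ^ 2 = 1)
    (heq1 : ∀ q ∈ Metric.ball c ρ,
      pdx (pdx f) q.1 q.2 * (u q) ^ 2 + 2 * pdy (pdx f) q.1 q.2 * u q * v q
        + pdy (pdy f) q.1 q.2 * (v q) ^ 2 = 0)
    (heq2 : ∀ q ∈ Metric.ball c ρ,
      pdx (pdx (pdx f)) q.1 q.2 * (u q) ^ 3 + 3 * pdy (pdx (pdx f)) q.1 q.2 * (u q) ^ 2 * v q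
        + 3 * pdy (pdy (pdx f)) q.1 q.2 * u q * (v q) ^ 2
        + pdy (pdy (pdy f)) q.1 q.2 * (v q) ^ 3 = 0) :
    ∀ (X Y : ℝ → ℝ) (ε : ℝ), 0 < ε →
      (∀ t ∈ Ioo (-ε) ε, (X t, Y t) ∈ Metric.ball c ρ) →
      (∀ t ∈ Ioo (-ε) ε, HasDerivAt X (u (X t, Y t)) t ∧ HasDerivAt Y (v (X t, Y t)) t) →
      ∃ x₀ y₀ u₀ v₀ α β : ℝ, ∀ t ∈ Ioo (-ε) ε,
        X t = x₀ + u₀ * t ∧ Y t = y₀ + v₀ * t ∧ f (X t) (Y t) = α + β * t := by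
  intro X Y ε hε hball hODE
  have hB : IsOpen (Metric.ball c ρ) := Metric.isOpen_ball
  have h0 : (0 : ℝ) ∈ Ioo (-ε) ε := ⟨neg_neg_iff_pos.mpr hε, hε⟩
  have affine : ∀ {g : ℝ → ℝ} {β : ℝ}, (∀ t ∈ Ioo (-ε) ε, HasDerivAt g β t) →
      ∀ t ∈ Ioo (-ε) ε, g t = g 0 + β * t := fun hg t ht => by
    simpa using eq_add_mul_sub_of_hasDerivAt isOpen_Ioo isPreconnected_Ioo hg h0 ht
  have hfield := fun t ht => hasDerivAt_field_comp_eq_zero hB hf hK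
    (hu.differentiableOn one_ne_zero) (hv.differentiableOn one_ne_zero) hunit heq1 heq2
    (eventually_of_mem (isOpen_Ioo.mem_nhds ht) hball) (hODE t ht).1 (hODE t ht).2
  set u₀ := u (X 0, Y 0)
  set v₀ := v (X 0, Y 0)
  have hu₀ : ∀ t ∈ Ioo (-ε) ε, u (X t, Y t) = u₀ := fun t ht => by
    simpa using affine (fun s hs => (hfield s hs).1) t ht
  have hv₀ : ∀ t ∈ Ioo (-ε) ε, v (X t, Y t) = v₀ := fun t ht => by
    simpa using affine (fun s hs => (hfield s hs).2) t ht
  have hX : ∀ t ∈ Ioo (-ε) ε, HasDerivAt X u₀ t := fun t ht => hu₀ t ht ▸ (hODE t ht).1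
  have hY : ∀ t ∈ Ioo (-ε) ε, HasDerivAt Y v₀ t := fun t ht => hv₀ t ht ▸ (hODE t ht).2
  have hslope : ∀ t ∈ Ioo (-ε) ε,
      HasDerivAt (fun s => u₀ * pdx f (X s) (Y s) + v₀ * pdy f (X s) (Y s)) 0 t := fun t ht => by
    have h := heq1 _ (hball t ht)
    rw [hu₀ t ht, hv₀ t ht] at h
    exact h ▸ hasDerivAt_directional_pd_comp (hf.of_le (by norm_num)) hB (hball t ht)
      (hX t ht) (hY t ht)
  have hfγ : ∀ t ∈ Ioo (-ε) ε, HasDerivAt (fun s => f (X s) (Y s))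
      (u₀ * pdx f (X 0) (Y 0) + v₀ * pdy f (X 0) (Y 0)) t := fun t ht => by
    have h := HasDerivAt.uncurry_comp ((hf.differentiableOn (by norm_num)).differentiableAt
      (hB.mem_nhds (hball t ht))) (hX t ht) (hY t ht)
    simpa [affine hslope t ht] using h
  exact ⟨X 0, Y 0, u₀, v₀, f (X 0) (Y 0), _,
    fun t ht => ⟨affine hX t ht, affine hY t ht, affine hfγ t ht⟩⟩
end

section
/- Let f be C^3 near (x,y) and suppose the curve t ↦ (x + v sin t + u(1-cos t), y - u sin t + v(1-cos t), z + a sin t + b(1-cos t)) has contact of order 2 with the graph of f at t = 0 (so z, a, b satisfy the osculation conditions). Then it has contact of order 3 if and only if f_xxx v³ - 3 f_xxy v² u + 3 f_xyy v u² - f_yyy u³ + 3(f_xx - f_yy) u v + 3 f_xy (v² - u²) = 0 at (x,y). -/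
open Real Set Filter

/-!
Write `γ` for the plane part of the curve. Its velocity
`(α, β) = (v cos t + u sin t, v sin t - u cos t)` satisfies `α' = -β` and `β' = α`, so the first
three derivatives of `t ↦ f (γ t)` follow from the first-order chain rule in coordinates alone.
The osculation conditions say exactly that `h t = z + a sin t + b (1 - cos t) - f (γ t)` vanishes
to second order at `0`; hence, by l'Hôpital, `h t / t³ → h'''(0) / 6`, and, by the symmetry of
second and third derivatives, `h'''(0)` is minus the left-hand side of the third-order equation.
-/

open Topology Function

section DirDeriv

variable {E F : Type*} [NormedAddCommGroup E] [NormedSpace ℝ E]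
  [NormedAddCommGroup F] [NormedSpace ℝ F] {G H : E → F} {p : E}

noncomputable def dirDeriv (w : E) (G : E → F) : E → F := fun q => fderiv ℝ G q w

theorem ContDiffAt.dirDeriv {n : WithTop ℕ∞} (hG : ContDiffAt ℝ (n + 1) G p) (w : E) :
    ContDiffAt ℝ n (dirDeriv w G) p :=
  hG.fderiv_right_succ.clm_apply (contDiffAt_const (c := w))

theorem Filter.EventuallyEq.dirDeriv (h : G =ᶠ[𝓝 p] H) (w : E) :
    _root_.dirDeriv w G =ᶠ[𝓝 p] _root_.dirDeriv w H := by
  filter_upwards [h.fderiv (𝕜 := ℝ)] with q hq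
  simp only [_root_.dirDeriv, hq]

theorem dirDeriv_comm (hG : ContDiffAt ℝ 2 G p) (v w : E) :
    dirDeriv v (dirDeriv w G) p = dirDeriv w (dirDeriv v G) p := by
  have hd : DifferentiableAt ℝ (fderiv ℝ G) p :=
    (hG.fderiv_right_succ (n := 1)).differentiableAt one_ne_zero
  have hD : ∀ e, fderiv ℝ (dirDeriv e G) p = (fderiv ℝ (fderiv ℝ G) p).flip e := fun e =>
    ((ContinuousLinearMap.apply ℝ F e).hasFDerivAt.comp p hd.hasFDerivAt).fderiv
  simp only [_root_.dirDeriv, hD]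
  simpa using hG.isSymmSndFDerivAt (by simp) v w

theorem dirDeriv_comm_inner (hG : ContDiffAt ℝ 2 G p) (u v w : E) :
    dirDeriv u (dirDeriv v (dirDeriv w G)) p = dirDeriv u (dirDeriv w (dirDeriv v G)) p := by
  have hsymm : dirDeriv v (dirDeriv w G) =ᶠ[𝓝 p] dirDeriv w (dirDeriv v G) := by
    filter_upwards [hG.eventually (by simp)] with q hq using dirDeriv_comm hq v w
  exact (hsymm.dirDeriv u).eq_of_nhds

theorem ContDiffAt.eventually_differentiableAt (hG : ContDiffAt ℝ 1 G p) :
    ∀ᶠ q in 𝓝 p, DifferentiableAt ℝ G q := by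
  filter_upwards [hG.eventually (by simp)] with q hq using hq.differentiableAt one_ne_zero

end DirDeriv

local notation "∂₁" => dirDeriv ((1 : ℝ), (0 : ℝ))
local notation "∂₂" => dirDeriv ((0 : ℝ), (1 : ℝ))

theorem DifferentiableAt.comp_hasDerivAt_prod {G : ℝ × ℝ → ℝ} {γ : ℝ → ℝ × ℝ} {d : ℝ × ℝ}
    {t : ℝ} (hG : DifferentiableAt ℝ G (γ t)) (hγ : HasDerivAt γ d t) :
    HasDerivAt (fun s => G (γ s)) (d.1 * ∂₁ G (γ t) + d.2 * ∂₂ G (γ t)) t := by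
  refine (hG.hasFDerivAt.comp_hasDerivAt t hγ).congr_deriv ?_
  have hd : d = d.1 • ((1 : ℝ), (0 : ℝ)) + d.2 • ((0 : ℝ), (1 : ℝ)) := by ext <;> simp
  conv_lhs => rw [hd, map_add, map_smul, map_smul]
  simp only [dirDeriv, smul_eq_mul]

section Partial

variable {f : ℝ → ℝ → ℝ}

theorem pdx_eq_dirDeriv {x y : ℝ} (hf : DifferentiableAt ℝ (uncurry f) (x, y)) :
    pdx f x y = ∂₁ (uncurry f) (x, y) :=
  (hf.hasFDerivAt.comp_hasDerivAt_of_eq x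
    ((hasDerivAt_id x).prodMk (hasDerivAt_const x y)) rfl).deriv

theorem pdy_eq_dirDeriv {x y : ℝ} (hf : DifferentiableAt ℝ (uncurry f) (x, y)) :
    pdy f x y = ∂₂ (uncurry f) (x, y) :=
  (hf.hasFDerivAt.comp_hasDerivAt_of_eq y
    ((hasDerivAt_const y x).prodMk (hasDerivAt_id y)) rfl).deriv

end Partial

def ContDiffRep (n : ℕ) (p : ℝ × ℝ) (g : ℝ → ℝ → ℝ) (G : ℝ × ℝ → ℝ) : Prop :=
  uncurry g =ᶠ[𝓝 p] G ∧ ContDiffAt ℝ n G p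

namespace ContDiffRep

variable {n : ℕ} {p : ℝ × ℝ} {g : ℝ → ℝ → ℝ} {G : ℝ × ℝ → ℝ}

theorem pdx (h : ContDiffRep (n + 1) p g G) : ContDiffRep n p (_root_.pdx g) (∂₁ G) := by
  obtain ⟨hgG, hG⟩ := h
  refine ⟨?_, ContDiffAt.dirDeriv (by exact_mod_cast hG) _⟩
  filter_upwards [hgG.eventually_nhds, (hG.of_le (by simp)).eventually_differentiableAt,
    hgG.dirDeriv _] with q hgGq hGq hq
  rw [← hq]
  exact pdx_eq_dirDeriv (hGq.congr_of_eventuallyEq hgGq)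

theorem pdy (h : ContDiffRep (n + 1) p g G) : ContDiffRep n p (_root_.pdy g) (∂₂ G) := by
  obtain ⟨hgG, hG⟩ := h
  refine ⟨?_, ContDiffAt.dirDeriv (by exact_mod_cast hG) _⟩
  filter_upwards [hgG.eventually_nhds, (hG.of_le (by simp)).eventually_differentiableAt,
    hgG.dirDeriv _] with q hgGq hGq hq
  rw [← hq]
  exact pdy_eq_dirDeriv (hGq.congr_of_eventuallyEq hgGq)

theorem apply_eq {x y : ℝ} (h : ContDiffRep n (x, y) g G) : g x y = G (x, y) :=
  h.1.eq_of_nhds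

end ContDiffRep

theorem tendsto_div_pow_succ_of_hasDerivAt {h h' : ℝ → ℝ} {n : ℕ} {L : ℝ}
    (hd : ∀ᶠ t in 𝓝 0, HasDerivAt h (h' t) t) (h0 : h 0 = 0)
    (hlim : Tendsto (fun t => h' t / t ^ n) (𝓝[≠] 0) (𝓝 L)) :
    Tendsto (fun t => h t / t ^ (n + 1)) (𝓝[≠] 0) (𝓝 (L / (n + 1))) := by
  have hcont : Tendsto h (𝓝[≠] 0) (𝓝 0) := by
    simpa [h0] using hd.self_of_nhds.continuousAt.tendsto.mono_left nhdsWithin_le_nhds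
  have hpow : Tendsto (fun t : ℝ => t ^ (n + 1)) (𝓝[≠] 0) (𝓝 0) := by
    simpa using ((continuous_pow (n + 1)).tendsto (0 : ℝ)).mono_left nhdsWithin_le_nhds
  refine HasDerivAt.lhopital_zero_nhdsNE (eventually_nhdsWithin_of_eventually_nhds hd)
    (.of_forall fun t => (hasDerivAt_pow (n + 1) t)) ?_ hcont hpow ?_
  · filter_upwards [self_mem_nhdsWithin] with t (ht : t ≠ 0)
    positivity
  · refine (hlim.div_const (n + 1)).congr fun t => ?_
    rw [div_div, Nat.add_sub_cancel, Nat.cast_add_one, mul_comm]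

theorem tendsto_div_cube_of_hasDerivAt {h h₁ h₂ : ℝ → ℝ} {L : ℝ}
    (hh : ∀ᶠ t in 𝓝 0, HasDerivAt h (h₁ t) t) (hh₁ : ∀ᶠ t in 𝓝 0, HasDerivAt h₁ (h₂ t) t)
    (hh₂ : HasDerivAt h₂ L 0) (h0 : h 0 = 0) (h₁0 : h₁ 0 = 0) (h₂0 : h₂ 0 = 0) :
    Tendsto (fun t => h t / t ^ 3) (𝓝[≠] 0) (𝓝 (L / 6)) := by
  have hslope : Tendsto (fun t => h₂ t / t ^ 1) (𝓝[≠] 0) (𝓝 L) := by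
    refine (hasDerivAt_iff_tendsto_slope.mp hh₂).congr fun t => ?_
    simp [slope_def_field, h₂0]
  convert tendsto_div_pow_succ_of_hasDerivAt hh h0
    (tendsto_div_pow_succ_of_hasDerivAt hh₁ h₁0 hslope) using 2
  norm_num [div_div]

section Rotating

variable (γ : ℝ → ℝ × ℝ) (α β : ℝ → ℝ)

noncomputable def derivAlong (G : ℝ × ℝ → ℝ) (t : ℝ) : ℝ :=
  α t * ∂₁ G (γ t) + β t * ∂₂ G (γ t)

-- The next two are the higher derivatives of `t ↦ G (γ t)` only when `α' = -β` and `β' = α`.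
noncomputable def secondDerivAlong (G : ℝ × ℝ → ℝ) (t : ℝ) : ℝ :=
  -β t * ∂₁ G (γ t) + α t * derivAlong γ α β (∂₁ G) t
    + (α t * ∂₂ G (γ t) + β t * derivAlong γ α β (∂₂ G) t)

noncomputable def thirdDerivAlong (G : ℝ × ℝ → ℝ) (t : ℝ) : ℝ :=
  -α t * ∂₁ G (γ t) - 2 * β t * derivAlong γ α β (∂₁ G) t
    + α t * secondDerivAlong γ α β (∂₁ G) t - β t * ∂₂ G (γ t) + 2 * α t * derivAlong γ α β (∂₂ G) t
    + β t * secondDerivAlong γ α β (∂₂ G) t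

variable {γ α β} {G : ℝ × ℝ → ℝ} {t : ℝ}

theorem hasDerivAt_comp_derivAlong (hγ : HasDerivAt γ (α t, β t) t)
    (hG : DifferentiableAt ℝ G (γ t)) :
    HasDerivAt (fun s => G (γ s)) (derivAlong γ α β G t) t :=
  hG.comp_hasDerivAt_prod hγ

theorem hasDerivAt_derivAlong (hγ : HasDerivAt γ (α t, β t) t) (hα : HasDerivAt α (-β t) t)
    (hβ : HasDerivAt β (α t) t) (hG : ContDiffAt ℝ 2 G (γ t)) :
    HasDerivAt (derivAlong γ α β G) (secondDerivAlong γ α β G t) t :=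
  (hα.mul (hasDerivAt_comp_derivAlong hγ ((hG.dirDeriv _).differentiableAt one_ne_zero))).add
    (hβ.mul (hasDerivAt_comp_derivAlong hγ ((hG.dirDeriv _).differentiableAt one_ne_zero)))

theorem hasDerivAt_secondDerivAlong (hγ : HasDerivAt γ (α t, β t) t)
    (hα : HasDerivAt α (-β t) t) (hβ : HasDerivAt β (α t) t) (hG : ContDiffAt ℝ 3 G (γ t)) :
    HasDerivAt (secondDerivAlong γ α β G) (thirdDerivAlong γ α β G t) t := by
  have h₁ : ContDiffAt ℝ 2 (∂₁ G) (γ t) := hG.dirDeriv _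
  have h₂ : ContDiffAt ℝ 2 (∂₂ G) (γ t) := hG.dirDeriv _
  have d₁ := hasDerivAt_comp_derivAlong hγ (h₁.differentiableAt two_ne_zero)
  have d₂ := hasDerivAt_comp_derivAlong hγ (h₂.differentiableAt two_ne_zero)
  refine ((hβ.neg.mul d₁).add (hα.mul (hasDerivAt_derivAlong hγ hα hβ h₁))
    |>.add ((hα.mul d₂).add (hβ.mul (hasDerivAt_derivAlong hγ hα hβ h₂)))).congr_deriv ?_
  simp only [thirdDerivAlong, Pi.neg_apply]
  ring

theorem tendsto_contact_div_cube (hγ : ∀ t, HasDerivAt γ (α t, β t) t)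
    (hα : ∀ t, HasDerivAt α (-β t) t) (hβ : ∀ t, HasDerivAt β (α t) t)
    (hG : ContDiffAt ℝ 3 G (γ 0)) {z a b : ℝ} (hz : z = G (γ 0))
    (ha : a = derivAlong γ α β G 0) (hb : b = secondDerivAlong γ α β G 0) :
    Tendsto (fun t => (z + a * sin t + b * (1 - cos t) - G (γ t)) / t ^ 3) (𝓝[≠] 0)
      (𝓝 ((-a - thirdDerivAlong γ α β G 0) / 6)) := by
  have hnear : ∀ᶠ t in 𝓝 0, ContDiffAt ℝ 3 G (γ t) :=
    (hγ 0).continuousAt.tendsto.eventually (hG.eventually (by simp))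
  have trig (t : ℝ) : HasDerivAt (fun s => z + a * sin s + b * (1 - cos s))
      (a * cos t + b * sin t) t := by
    refine (((hasDerivAt_sin t).const_mul a).const_add z |>.add
      (((hasDerivAt_cos t).const_sub 1).const_mul b)).congr_deriv ?_
    ring
  have trig₁ (t : ℝ) : HasDerivAt (fun s => a * cos s + b * sin s)
      (-(a * sin t) + b * cos t) t := by
    refine (((hasDerivAt_cos t).const_mul a).add
      ((hasDerivAt_sin t).const_mul b)).congr_deriv ?_
    ring
  have trig₂ : HasDerivAt (fun s => -(a * sin s) + b * cos s) (-a) 0 := by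
    refine (((hasDerivAt_sin 0).const_mul a).neg.add
      ((hasDerivAt_cos 0).const_mul b)).congr_deriv ?_
    simp
  apply tendsto_div_cube_of_hasDerivAt
    (h₁ := fun t => a * cos t + b * sin t - derivAlong γ α β G t)
    (h₂ := fun t => -(a * sin t) + b * cos t - secondDerivAlong γ α β G t)
  · filter_upwards [hnear] with t ht
    exact (trig t).sub (hasDerivAt_comp_derivAlong (hγ t) (ht.differentiableAt three_ne_zero))
  · filter_upwards [hnear] with t ht
    exact (trig₁ t).sub (hasDerivAt_derivAlong (hγ t) (hα t) (hβ t) (ht.of_le (by norm_num)))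
  · exact trig₂.sub (hasDerivAt_secondDerivAlong (hγ 0) (hα 0) (hβ 0) hG)
  all_goals simp [hz, ha, hb]

end Rotating

theorem Filter.Tendsto.tendsto_nhds_iff_eq {X Y : Type*} [TopologicalSpace Y] [T2Space Y]
    {l : Filter X} [l.NeBot] {g : X → Y} {a b : Y} (h : Tendsto g l (𝓝 a)) :
    Tendsto g l (𝓝 b) ↔ a = b :=
  ⟨tendsto_nhds_unique h, fun hab => hab ▸ h⟩

section Circle

variable (x y u v t : ℝ)

theorem hasDerivAt_circle :
    HasDerivAt (fun s => (x + v * sin s + u * (1 - cos s), y - u * sin s + v * (1 - cos s)))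
      (v * cos t + u * sin t, v * sin t - u * cos t) t := by
  refine HasDerivAt.prodMk ?_ ?_
  · refine ((((hasDerivAt_sin t).const_mul v).const_add x).add
      (((hasDerivAt_cos t).const_sub 1).const_mul u)).congr_deriv ?_
    ring
  · refine ((((hasDerivAt_sin t).const_mul u).const_sub y).add
      (((hasDerivAt_cos t).const_sub 1).const_mul v)).congr_deriv ?_
    ring

theorem hasDerivAt_mul_cos_add_mul_sin :
    HasDerivAt (fun s => v * cos s + u * sin s) (-(v * sin t - u * cos t)) t := by
  refine (((hasDerivAt_cos t).const_mul v).add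
    ((hasDerivAt_sin t).const_mul u)).congr_deriv ?_
  ring

theorem hasDerivAt_mul_sin_sub_mul_cos :
    HasDerivAt (fun s => v * sin s - u * cos s) (v * cos t + u * sin t) t :=
  (((hasDerivAt_sin t).const_mul v).sub ((hasDerivAt_cos t).const_mul u)).congr_deriv (by ring)

end Circle

theorem tendsto_conic_contact_iff {G : ℝ × ℝ → ℝ} {x y z a b u v : ℝ}
    (hG : ContDiffAt ℝ 3 G (x, y)) (hz : z = G (x, y))
    (ha : a = ∂₁ G (x, y) * v - ∂₂ G (x, y) * u)
    (hb : b = ∂₁ G (x, y) * u + ∂₂ G (x, y) * v + ∂₁ (∂₁ G) (x, y) * v ^ 2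
      - 2 * ∂₂ (∂₁ G) (x, y) * u * v + ∂₂ (∂₂ G) (x, y) * u ^ 2) :
    Tendsto (fun t => (z + a * sin t + b * (1 - cos t)
        - G (x + v * sin t + u * (1 - cos t), y - u * sin t + v * (1 - cos t))) / t ^ 3)
      (𝓝[≠] 0) (𝓝 0) ↔
    ∂₁ (∂₁ (∂₁ G)) (x, y) * v ^ 3 - 3 * ∂₂ (∂₁ (∂₁ G)) (x, y) * v ^ 2 * u
      + 3 * ∂₂ (∂₂ (∂₁ G)) (x, y) * v * u ^ 2 - ∂₂ (∂₂ (∂₂ G)) (x, y) * u ^ 3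
      + 3 * (∂₁ (∂₁ G) (x, y) - ∂₂ (∂₂ G) (x, y)) * u * v
      + 3 * ∂₂ (∂₁ G) (x, y) * (v ^ 2 - u ^ 2) = 0 := by
  set γ : ℝ → ℝ × ℝ := fun t =>
    (x + v * sin t + u * (1 - cos t), y - u * sin t + v * (1 - cos t))
  set α : ℝ → ℝ := fun t => v * cos t + u * sin t
  set β : ℝ → ℝ := fun t => v * sin t - u * cos t
  have hγ (t : ℝ) : HasDerivAt γ (α t, β t) t := hasDerivAt_circle x y u v t
  have hα (t : ℝ) : HasDerivAt α (-β t) t := hasDerivAt_mul_cos_add_mul_sin u v t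
  have hβ (t : ℝ) : HasDerivAt β (α t) t := hasDerivAt_mul_sin_sub_mul_cos u v t
  have hγ0 : γ 0 = (x, y) := by simp [γ]
  have hG₂ : ContDiffAt ℝ 2 G (x, y) := hG.of_le (by norm_num)
  have hG₁ (w : ℝ × ℝ) : ContDiffAt ℝ 2 (dirDeriv w G) (x, y) := hG.dirDeriv w
  have s₁ := dirDeriv_comm hG₂ ((1 : ℝ), (0 : ℝ)) ((0 : ℝ), (1 : ℝ))
  have s₂ := dirDeriv_comm (hG₁ ((1 : ℝ), (0 : ℝ))) ((1 : ℝ), (0 : ℝ)) ((0 : ℝ), (1 : ℝ))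
  have s₃ := dirDeriv_comm (hG₁ ((0 : ℝ), (1 : ℝ))) ((1 : ℝ), (0 : ℝ)) ((0 : ℝ), (1 : ℝ))
  have s₄ := dirDeriv_comm_inner hG₂ ((1 : ℝ), (0 : ℝ)) ((1 : ℝ), (0 : ℝ)) ((0 : ℝ), (1 : ℝ))
  have s₅ := dirDeriv_comm_inner hG₂ ((0 : ℝ), (1 : ℝ)) ((1 : ℝ), (0 : ℝ)) ((0 : ℝ), (1 : ℝ))
  have ha' : a = derivAlong γ α β G 0 := by
    simp only [derivAlong, hγ0, α, β, sin_zero, cos_zero, ha]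
    ring
  have hb' : b = secondDerivAlong γ α β G 0 := by
    simp only [secondDerivAlong, derivAlong, hγ0, α, β, sin_zero, cos_zero, hb, s₁]
    ring
  refine (tendsto_contact_div_cube hγ hα hβ (hγ0 ▸ hG) (hγ0 ▸ hz) ha' hb').tendsto_nhds_iff_eq
    |>.trans ?_
  simp only [thirdDerivAlong, secondDerivAlong, derivAlong, hγ0, α, β, sin_zero, cos_zero, ha]
  rw [s₃, s₅, s₄, s₂, s₁]
  constructor <;> intro h
  · linear_combination -6 * h
  · linear_combination -h / 6

theorem stmt_9_general (f : ℝ → ℝ → ℝ) (x y z a b u v : ℝ)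
    (hf : ContDiffAt ℝ 3 (fun p : ℝ × ℝ => f p.1 p.2) (x, y))
    (hz : z = f x y)
    (ha : a = pdx f x y * v - pdy f x y * u)
    (hb : b = pdx f x y * u + pdy f x y * v
        + pdx (pdx f) x y * v ^ 2 - 2 * pdy (pdx f) x y * u * v + pdy (pdy f) x y * u ^ 2) :
    Tendsto (fun t : ℝ =>
        (z + a * Real.sin t + b * (1 - Real.cos t)
          - f (x + v * Real.sin t + u * (1 - Real.cos t))
              (y - u * Real.sin t + v * (1 - Real.cos t))) / t ^ 3)
      (nhdsWithin 0 {(0 : ℝ)}ᶜ) (nhds 0)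
    ↔ pdx (pdx (pdx f)) x y * v ^ 3 - 3 * pdy (pdx (pdx f)) x y * v ^ 2 * u
        + 3 * pdy (pdy (pdx f)) x y * v * u ^ 2 - pdy (pdy (pdy f)) x y * u ^ 3
        + 3 * (pdx (pdx f) x y - pdy (pdy f) x y) * u * v
        + 3 * pdy (pdx f) x y * (v ^ 2 - u ^ 2) = 0 := by
  have hF : ContDiffRep 3 (x, y) f (uncurry f) := ⟨.rfl, hf⟩
  simp only [hF.pdx.apply_eq, hF.pdy.apply_eq, hF.pdx.pdx.apply_eq, hF.pdx.pdy.apply_eq,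
    hF.pdy.pdy.apply_eq, hF.pdx.pdx.pdx.apply_eq, hF.pdx.pdx.pdy.apply_eq,
    hF.pdx.pdy.pdy.apply_eq, hF.pdy.pdy.pdy.apply_eq] at ha hb ⊢
  exact tendsto_conic_contact_iff hf hz ha hb

/-- given the osculation (order 2 contact) conditions, the conic has third
order contact with the graph of `f` at `t = 0` iff the third order equation holds. -/
theorem stmt_9 (f : ℝ → ℝ → ℝ) (x y z a b u v : ℝ)
    (hf : ContDiffAt ℝ 3 (fun p : ℝ × ℝ => f p.1 p.2) (x, y))
    (huv : (u, v) ≠ ((0 : ℝ), (0 : ℝ)))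
    (hz : z = f x y)
    (ha : a = pdx f x y * v - pdy f x y * u)
    (hb : b = pdx f x y * u + pdy f x y * v
        + pdx (pdx f) x y * v ^ 2 - 2 * pdy (pdx f) x y * u * v + pdy (pdy f) x y * u ^ 2) :
    Tendsto (fun t : ℝ =>
        (z + a * Real.sin t + b * (1 - Real.cos t)
          - f (x + v * Real.sin t + u * (1 - Real.cos t))
              (y - u * Real.sin t + v * (1 - Real.cos t))) / t ^ 3)
      (nhdsWithin 0 {(0 : ℝ)}ᶜ) (nhds 0)
    ↔ pdx (pdx (pdx f)) x y * v ^ 3 - 3 * pdy (pdx (pdx f)) x y * v ^ 2 * u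
        + 3 * pdy (pdy (pdx f)) x y * v * u ^ 2 - pdy (pdy (pdy f)) x y * u ^ 3
        + 3 * (pdx (pdx f) x y - pdy (pdy f) x y) * u * v
        + 3 * pdy (pdx f) x y * (v ^ 2 - u ^ 2) = 0 :=
  stmt_9_general f x y z a b u v hf hz ha hb
end

section
/- For θ ∈ (0, π/2), the circle in the plane z=0 through the point (x,y) with center (x+u,y+v), (u,v) ≠ (0,0), is the stereographic projection (from (0,0,-1)) of a circle of intrinsic (spherical) radius π/2 - θ on the unit sphere, not passing through (0,0,-1), if and only if (x² + y² + 1 + 2xu + 2yv)² = 4 tan²θ (u² + v²). -/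
/-!
A spherical circle `{p ∈ S² | ⟪p, c⟫ = s}` avoiding the south pole projects onto the plane
circle with centre `(c₁, c₂) / t` and squared radius `(1 - s²) / t²`, where `t = c₃ + s`.
Conversely, a plane circle with centre `(a, b)` and squared radius `ρ` is such an image iff
`c = t • (a, b, 1) - (0, 0, s)` is a unit vector for some `t` with `t² ρ = 1 - s²`; eliminating
`t` gives `(1 - s²)(a² + b² + 1 - ρ)² = 4 s² ρ`. For `s = cos (π/2 - θ) = sin θ` this is the
claimed equation.
-/

open Real Set

noncomputable section

def stereoProj (p : ℝ × ℝ × ℝ) : ℝ × ℝ :=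
  (p.1 / (p.2.2 + 1), p.2.1 / (p.2.2 + 1))

def stereoProjInv (q : ℝ × ℝ) : ℝ × ℝ × ℝ :=
  (2 * q.1 / (q.1 ^ 2 + q.2 ^ 2 + 1), 2 * q.2 / (q.1 ^ 2 + q.2 ^ 2 + 1),
    2 / (q.1 ^ 2 + q.2 ^ 2 + 1) - 1)

def sphereCircle (c : ℝ × ℝ × ℝ) (s : ℝ) : Set (ℝ × ℝ × ℝ) :=
  {p | p.1 ^ 2 + p.2.1 ^ 2 + p.2.2 ^ 2 = 1 ∧ p.1 * c.1 + p.2.1 * c.2.1 + p.2.2 * c.2.2 = s}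

def planeCircle (a b ρ : ℝ) : Set (ℝ × ℝ) :=
  {q | (q.1 - a) ^ 2 + (q.2 - b) ^ 2 = ρ}

end

lemma stereoProjInv_mem_sphere (q : ℝ × ℝ) :
    (stereoProjInv q).1 ^ 2 + (stereoProjInv q).2.1 ^ 2 + (stereoProjInv q).2.2 ^ 2 = 1 := by
  have hD : q.1 ^ 2 + q.2 ^ 2 + 1 ≠ 0 := by positivity
  simp only [stereoProjInv]
  field_simp
  ring

lemma stereoProj_stereoProjInv (q : ℝ × ℝ) : stereoProj (stereoProjInv q) = q := by
  have hD : q.1 ^ 2 + q.2 ^ 2 + 1 ≠ 0 := by positivity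
  simp only [stereoProj, stereoProjInv, sub_add_cancel]
  ext <;> field_simp

lemma planeCircle_inj {a b ρ a' b' ρ' : ℝ} (hρ' : 0 < ρ')
    (h : planeCircle a b ρ = planeCircle a' b' ρ') : a = a' ∧ b = b' ∧ ρ = ρ' := by
  set r := √ρ'
  have hr : r ^ 2 = ρ' := sq_sqrt hρ'.le
  have hr0 : 0 < r := sqrt_pos.2 hρ'
  have mem : ∀ q ∈ planeCircle a' b' ρ', q ∈ planeCircle a b ρ := fun q hq ↦ h ▸ hq
  have h₁ := mem (a' + r, b') (by simp [planeCircle, hr])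
  have h₂ := mem (a' - r, b') (by simp [planeCircle, hr])
  have h₃ := mem (a', b' + r) (by simp [planeCircle, hr])
  have h₄ := mem (a', b' - r) (by simp [planeCircle, hr])
  simp only [planeCircle, mem_ofPred_eq] at h₁ h₂ h₃ h₄
  have ha : a = a' := by
    have : 4 * r * (a' - a) = 0 := by linear_combination h₁ - h₂
    simpa [hr0.ne', sub_eq_zero, eq_comm] using this
  have hb : b = b' := by
    have : 4 * r * (b' - b) = 0 := by linear_combination h₃ - h₄
    simpa [hr0.ne', sub_eq_zero, eq_comm] using this
  subst ha hb
  exact ⟨rfl, rfl, by linear_combination -h₁ + hr⟩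

-- `ht` says that the south pole `(0, 0, -1)` is not on `sphereCircle c s`.
lemma image_stereoProj_sphereCircle {c : ℝ × ℝ × ℝ} {s : ℝ}
    (hc : c.1 ^ 2 + c.2.1 ^ 2 + c.2.2 ^ 2 = 1) (ht : c.2.2 + s ≠ 0) :
    stereoProj '' sphereCircle c s
      = planeCircle (c.1 / (c.2.2 + s)) (c.2.1 / (c.2.2 + s)) ((1 - s ^ 2) / (c.2.2 + s) ^ 2) := by
  ext q
  constructor
  · rintro ⟨p, ⟨hp, hpc⟩, rfl⟩
    have hz : p.2.2 + 1 ≠ 0 := by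
      intro hz
      have hx : p.1 = 0 := by nlinarith [sq_nonneg p.2.1]
      have hy : p.2.1 = 0 := by nlinarith [sq_nonneg p.1]
      exact ht (by linear_combination -hpc + (c.1 : ℝ) * hx + c.2.1 * hy + c.2.2 * hz)
    have key : (p.1 * (c.2.2 + s) - (p.2.2 + 1) * c.1) ^ 2
        + (p.2.1 * (c.2.2 + s) - (p.2.2 + 1) * c.2.1) ^ 2 = (1 - s ^ 2) * (p.2.2 + 1) ^ 2 := by
      linear_combination (c.2.2 + s) ^ 2 * hp - 2 * (c.2.2 + s) * (p.2.2 + 1) * hpc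
        + (p.2.2 + 1) ^ 2 * hc
    simp only [planeCircle, stereoProj, mem_ofPred_eq]
    field_simp
    linear_combination key
  · intro hq
    refine ⟨stereoProjInv q, ⟨stereoProjInv_mem_sphere q, ?_⟩, stereoProj_stereoProjInv q⟩
    obtain ⟨X, Y⟩ := q
    simp only [planeCircle, mem_ofPred_eq] at hq
    have hD : X ^ 2 + Y ^ 2 + 1 ≠ 0 := by positivity
    have key : (X * (c.2.2 + s) - c.1) ^ 2 + (Y * (c.2.2 + s) - c.2.1) ^ 2 = 1 - s ^ 2 := by
      field_simp at hq
      linear_combination hq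
    have hinner : 2 * (X * c.1 + Y * c.2.1) = (c.2.2 + s) * (X ^ 2 + Y ^ 2) + (s - c.2.2) :=
      mul_left_cancel₀ ht (by linear_combination hc - key)
    simp only [stereoProjInv]
    field_simp
    linear_combination hinner

lemma exists_image_stereoProj_sphereCircle_eq_iff {s a b ρ : ℝ} (hs : s ≠ 0) (hρ : 0 < ρ) :
    (∃ c : ℝ × ℝ × ℝ, c.1 ^ 2 + c.2.1 ^ 2 + c.2.2 ^ 2 = 1 ∧ -c.2.2 ≠ s ∧
        stereoProj '' sphereCircle c s = planeCircle a b ρ)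
      ↔ (1 - s ^ 2) * (a ^ 2 + b ^ 2 + 1 - ρ) ^ 2 = 4 * s ^ 2 * ρ := by
  constructor
  · rintro ⟨c, hc, hcs, himg⟩
    have ht : c.2.2 + s ≠ 0 := fun h ↦ hcs (by linarith)
    rw [image_stereoProj_sphereCircle hc ht] at himg
    obtain ⟨ha, hb, hr⟩ := planeCircle_inj hρ himg
    rw [div_eq_iff ht] at ha hb
    rw [div_eq_iff (pow_ne_zero 2 ht)] at hr
    have htB : (c.2.2 + s) * (a ^ 2 + b ^ 2 + 1 - ρ) = 2 * s :=
      mul_left_cancel₀ ht (by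
        linear_combination hc - (c.1 + a * (c.2.2 + s)) * ha - (c.2.1 + b * (c.2.2 + s)) * hb + hr)
    linear_combination (a ^ 2 + b ^ 2 + 1 - ρ) ^ 2 * hr
      + ρ * ((c.2.2 + s) * (a ^ 2 + b ^ 2 + 1 - ρ) + 2 * s) * htB
  · intro h
    set B := a ^ 2 + b ^ 2 + 1 - ρ
    have hB : B ≠ 0 := by
      rintro hB
      rw [hB] at h
      have : 0 < 4 * s ^ 2 * ρ := by positivity
      linarith
    -- the parameter `t = c₃ + s` of the sketch above is `2 s / B`
    set t := 2 * s / B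
    have ht : t ≠ 0 := div_ne_zero (by positivity) hB
    have hc : (t * a) ^ 2 + (t * b) ^ 2 + (t - s) ^ 2 = 1 := by
      simp only [t]
      field_simp
      linear_combination -h
    have hr : (1 - s ^ 2) / t ^ 2 = ρ := by
      simp only [t]
      field_simp
      linear_combination h
    refine ⟨(t * a, t * b, t - s), hc, by simpa using ht, ?_⟩
    rw [image_stereoProj_sphereCircle hc (by simpa using ht)]
    simp only [sub_add_cancel, mul_div_cancel_left₀ _ ht, hr]

/-- the circle through `(x,y)` with center `(x+u, y+v)` in the plane is
the stereographic projection (from `(0,0,-1)`) of a spherical circle of intrinsic radius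
`π/2 - θ` not passing through `(0,0,-1)` iff
`(x² + y² + 1 + 2xu + 2yv)² = 4 tan²θ (u² + v²)`. -/
theorem stmt_12 (θ x y u v : ℝ) (hθ : θ ∈ Ioo 0 (π / 2))
    (huv : (u, v) ≠ ((0 : ℝ), (0 : ℝ))) :
    (∃ c : ℝ × ℝ × ℝ, c.1 ^ 2 + c.2.1 ^ 2 + c.2.2 ^ 2 = 1 ∧
      -c.2.2 ≠ Real.cos (π / 2 - θ) ∧
      (fun p : ℝ × ℝ × ℝ => ((p.1 / (p.2.2 + 1), p.2.1 / (p.2.2 + 1)) : ℝ × ℝ)) ''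
          {p : ℝ × ℝ × ℝ | p.1 ^ 2 + p.2.1 ^ 2 + p.2.2 ^ 2 = 1 ∧
            p.1 * c.1 + p.2.1 * c.2.1 + p.2.2 * c.2.2 = Real.cos (π / 2 - θ)}
        = {q : ℝ × ℝ | (q.1 - (x + u)) ^ 2 + (q.2 - (y + v)) ^ 2 = u ^ 2 + v ^ 2})
    ↔ (x ^ 2 + y ^ 2 + 1 + 2 * x * u + 2 * y * v) ^ 2
        = 4 * Real.tan θ ^ 2 * (u ^ 2 + v ^ 2) := by
  have hsin : sin θ ≠ 0 := (sin_pos_of_pos_of_lt_pi hθ.1 (by linarith [hθ.2, pi_pos])).ne'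
  have hcos : cos θ ≠ 0 := (cos_pos_of_mem_Ioo ⟨by linarith [hθ.1, pi_pos], hθ.2⟩).ne'
  have hρ : 0 < u ^ 2 + v ^ 2 := by
    rcases not_and_or.1 (by simpa [Prod.ext_iff] using huv) with hu | hv <;> positivity
  rw [cos_pi_div_two_sub]
  refine (exists_image_stereoProj_sphereCircle_eq_iff (a := x + u) (b := y + v) hsin hρ).trans ?_
  rw [← cos_sq', tan_eq_sin_div_cos, div_pow]
  constructor <;> intro h
  · field_simp
    linear_combination h
  · field_simp at h
    linear_combination h
end

section
/- The oriented sphere with center (m₁,m₂,m₃) and radius R (with inwards oriented normals) corresponds in the isotropic model to the graph of z = ((R+m₃)/2)(x²+y²) - m₁x - m₂y + (R-m₃)/2; that is, an oriented plane with unit normal (n₁,n₂,n₃) ≠ (0,0,-1) and equation n₁X + n₂Y + n₃Z + h = 0 is tangent to this sphere with matching orientation if and only if its isotropic image point (x,y,z) = (n₁/(n₃+1), n₂/(n₃+1), h/(n₃+1)) satisfies z = ((R+m₃)/2)(x²+y²) - m₁x - m₂y + (R-m₃)/2. -/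
open Real

/-! On the unit sphere `n₁² + n₂² = (1 - n₃)(1 + n₃)`, so at the isotropic image the quadratic
term of the paraboloid collapses to `(R + m₃)(1 - n₃) / 2`, and the whole right-hand side becomes
`(R - n·m) / (n₃ + 1)`. Multiplying by `n₃ + 1 ≠ 0` leaves the tangency condition `h = R - n·m`. -/

lemma isotropic_paraboloid_eq {m₁ m₂ m₃ R n₁ n₂ n₃ : ℝ}
    (hn : n₁ ^ 2 + n₂ ^ 2 + n₃ ^ 2 = 1) (hn₃ : n₃ + 1 ≠ 0) :
    ((R + m₃) / 2) * ((n₁ / (n₃ + 1)) ^ 2 + (n₂ / (n₃ + 1)) ^ 2)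
        - m₁ * (n₁ / (n₃ + 1)) - m₂ * (n₂ / (n₃ + 1)) + (R - m₃) / 2
      = (R - (n₁ * m₁ + n₂ * m₂ + n₃ * m₃)) / (n₃ + 1) := by
  have hcircle : n₁ ^ 2 + n₂ ^ 2 = (1 - n₃) * (1 + n₃) := by linear_combination hn
  field_simp
  linear_combination (R + m₃) * hcircle

/-- an oriented plane `n₁X + n₂Y + n₃Z + h = 0` with unit normal
`n ≠ (0,0,-1)` is tangent with matching orientation to the oriented sphere with center
`(m₁,m₂,m₃)`, radius `R` and inward normals (i.e. `n·m + h = R`) iff its isotropic image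
lies on the graph `z = ((R+m₃)/2)(x²+y²) - m₁x - m₂y + (R-m₃)/2`. -/
theorem stmt_13 (m₁ m₂ m₃ R n₁ n₂ n₃ h : ℝ)
    (hn : n₁ ^ 2 + n₂ ^ 2 + n₃ ^ 2 = 1) (hn₃ : n₃ ≠ -1) :
    (n₁ * m₁ + n₂ * m₂ + n₃ * m₃ + h = R)
    ↔ h / (n₃ + 1)
        = ((R + m₃) / 2) * ((n₁ / (n₃ + 1)) ^ 2 + (n₂ / (n₃ + 1)) ^ 2)
          - m₁ * (n₁ / (n₃ + 1)) - m₂ * (n₂ / (n₃ + 1)) + (R - m₃) / 2 := by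
  have hn₃' : n₃ + 1 ≠ 0 := fun h0 => hn₃ (eq_neg_of_add_eq_zero_left h0)
  rw [isotropic_paraboloid_eq hn hn₃', div_left_inj' hn₃', eq_sub_iff_add_eq, add_comm]
end

section
/- Suppose the conic t ↦ (x + v sin t + u(1-cos t), y - u sin t + v(1-cos t), z + a sin t + b(1-cos t)), with (u,v) ≠ (0,0), lies on the paraboloid Z = (m₃/2)(X²+Y²) - m₁X - m₂Y - m₃/2 (the isotropic image of the sphere of radius 0 centered at m = (m₁,m₂,m₃)). If x² + y² + 1 + 2ux + 2vy ≠ 0 then m is uniquely determined and equals the formula m = 1/((u²+v²)(x²+y²+1+2ux+2vy)) · ((x²-y²-1)(av+bu) + 2xy(bv-au) - 2(u²+v²)(uz+xz+ay), (y²-x²-1)(bv-au) + 2xy(av+bu) - 2(u²+v²)(vz+yz-ax), 2x(av+bu) + 2y(bv-au) - 2(u²+v²)z). -/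
open Real

/-!
Along the conic the quadratic part of the paraboloid collapses: the horizontal displacement
`sin t • (v, -u) + (1 - cos t) • (u, v)` has squared length `2 (u² + v²) (1 - cos t)`, so the
height of the paraboloid over the conic is affine in `sin t` and `1 - cos t`. Comparing the
coefficients of `1`, `sin t` and `1 - cos t` gives three linear equations for `m`, whose
determinant is `-(u² + v²) (x² + y² + 1 + 2ux + 2vy) / 2`; Cramer's rule gives the formula.
-/

/-- The paraboloid `Z = isoParaboloid m₁ m₂ m₃ X Y`, the isotropic image of the sphere of radius
`0` centred at `(m₁, m₂, m₃)`. -/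
noncomputable def isoParaboloid (m₁ m₂ m₃ X Y : ℝ) : ℝ :=
  (m₃ / 2) * (X ^ 2 + Y ^ 2) - m₁ * X - m₂ * Y - m₃ / 2

lemma isoParaboloid_conic (x y u v m₁ m₂ m₃ t : ℝ) :
    isoParaboloid m₁ m₂ m₃ (x + v * sin t + u * (1 - cos t)) (y - u * sin t + v * (1 - cos t))
      = isoParaboloid m₁ m₂ m₃ x y
        + (m₃ * (x * v - y * u) - v * m₁ + u * m₂) * sin t
        + (m₃ * (u * x + v * y + u ^ 2 + v ^ 2) - u * m₁ - v * m₂) * (1 - cos t) := by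
  unfold isoParaboloid
  linear_combination (m₃ / 2 * (u ^ 2 + v ^ 2)) * sin_sq_add_cos_sq t

lemma eq_of_forall_add_mul_sin_add_mul_one_sub_cos {p q r p' q' r' : ℝ}
    (h : ∀ t, p + q * sin t + r * (1 - cos t) = p' + q' * sin t + r' * (1 - cos t)) :
    p = p' ∧ q = q' ∧ r = r' := by
  have h₀ := h 0
  have hπ := h π
  have hπ₂ := h (π / 2)
  simp only [sin_zero, cos_zero, sin_pi, cos_pi, sin_pi_div_two, cos_pi_div_two] at h₀ hπ hπ₂
  exact ⟨by linarith, by linarith, by linarith⟩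

lemma center_eq_of_linear_system {x y z a b u v m₁ m₂ m₃ : ℝ}
    (hD : (u ^ 2 + v ^ 2) * (x ^ 2 + y ^ 2 + 1 + 2 * u * x + 2 * v * y) ≠ 0)
    (hz : z = isoParaboloid m₁ m₂ m₃ x y)
    (ha : a = m₃ * (x * v - y * u) - v * m₁ + u * m₂)
    (hb : b = m₃ * (u * x + v * y + u ^ 2 + v ^ 2) - u * m₁ - v * m₂) :
    m₁ = ((x ^ 2 - y ^ 2 - 1) * (a * v + b * u) + 2 * x * y * (b * v - a * u)
          - 2 * (u ^ 2 + v ^ 2) * (u * z + x * z + a * y))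
        / ((u ^ 2 + v ^ 2) * (x ^ 2 + y ^ 2 + 1 + 2 * u * x + 2 * v * y)) ∧
    m₂ = ((y ^ 2 - x ^ 2 - 1) * (b * v - a * u) + 2 * x * y * (a * v + b * u)
          - 2 * (u ^ 2 + v ^ 2) * (v * z + y * z - a * x))
        / ((u ^ 2 + v ^ 2) * (x ^ 2 + y ^ 2 + 1 + 2 * u * x + 2 * v * y)) ∧
    m₃ = (2 * x * (a * v + b * u) + 2 * y * (b * v - a * u)
          - 2 * (u ^ 2 + v ^ 2) * z)
        / ((u ^ 2 + v ^ 2) * (x ^ 2 + y ^ 2 + 1 + 2 * u * x + 2 * v * y)) := by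
  unfold isoParaboloid at hz
  refine ⟨?_, ?_, ?_⟩ <;> rw [eq_div_iff hD]
  · linear_combination 2 * (u ^ 2 + v ^ 2) * (x + u) * hz
      - (2 * y * (x * v - y * u) + u * (x ^ 2 + y ^ 2 - 1)) * hb
      + (2 * y * (u * x + v * y + u ^ 2 + v ^ 2) - v * (x ^ 2 + y ^ 2 - 1)) * ha
  · linear_combination 2 * (u ^ 2 + v ^ 2) * (y + v) * hz
      + (2 * x * (x * v - y * u) - v * (x ^ 2 + y ^ 2 - 1)) * hb
      - (2 * x * (u * x + v * y + u ^ 2 + v ^ 2) - u * (x ^ 2 + y ^ 2 - 1)) * ha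
  · linear_combination 2 * (u ^ 2 + v ^ 2) * hz - 2 * (u * x + v * y) * hb
      - 2 * (x * v - y * u) * ha

/-- if the conic lies on the paraboloid which is the isotropic image of
the sphere of radius `0` centered at `m`, and the denominator does not vanish, then the
vertex `m` is uniquely given by the stated formula. -/
theorem stmt_14 (x y z a b u v m₁ m₂ m₃ : ℝ)
    (huv : (u, v) ≠ ((0 : ℝ), (0 : ℝ)))
    (hden : x ^ 2 + y ^ 2 + 1 + 2 * u * x + 2 * v * y ≠ 0)
    (hon : ∀ t : ℝ,
      z + a * Real.sin t + b * (1 - Real.cos t)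
        = (m₃ / 2) * ((x + v * Real.sin t + u * (1 - Real.cos t)) ^ 2
            + (y - u * Real.sin t + v * (1 - Real.cos t)) ^ 2)
          - m₁ * (x + v * Real.sin t + u * (1 - Real.cos t))
          - m₂ * (y - u * Real.sin t + v * (1 - Real.cos t))
          - m₃ / 2) :
    m₁ = ((x ^ 2 - y ^ 2 - 1) * (a * v + b * u) + 2 * x * y * (b * v - a * u)
          - 2 * (u ^ 2 + v ^ 2) * (u * z + x * z + a * y))
        / ((u ^ 2 + v ^ 2) * (x ^ 2 + y ^ 2 + 1 + 2 * u * x + 2 * v * y)) ∧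
    m₂ = ((y ^ 2 - x ^ 2 - 1) * (b * v - a * u) + 2 * x * y * (a * v + b * u)
          - 2 * (u ^ 2 + v ^ 2) * (v * z + y * z - a * x))
        / ((u ^ 2 + v ^ 2) * (x ^ 2 + y ^ 2 + 1 + 2 * u * x + 2 * v * y)) ∧
    m₃ = (2 * x * (a * v + b * u) + 2 * y * (b * v - a * u)
          - 2 * (u ^ 2 + v ^ 2) * z)
        / ((u ^ 2 + v ^ 2) * (x ^ 2 + y ^ 2 + 1 + 2 * u * x + 2 * v * y)) := by
  have huv' : u ^ 2 + v ^ 2 ≠ 0 := by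
    contrapose! huv
    obtain ⟨hu, hv⟩ := (add_eq_zero_iff_of_nonneg (sq_nonneg u) (sq_nonneg v)).mp huv
    rw [pow_eq_zero_iff two_ne_zero] at hu hv
    rw [hu, hv]
  obtain ⟨hz, ha, hb⟩ := eq_of_forall_add_mul_sin_add_mul_one_sub_cos fun t ↦
    (hon t).trans (isoParaboloid_conic x y u v m₁ m₂ m₃ t)
  exact center_eq_of_linear_system (mul_ne_zero huv' hden) hz ha hb
end

section
/- Let Φ be a surface with oriented unit normal (n₁(p), n₂(p), n₃(p)) at the point r(p) = (r₁,r₂,r₃)(p), with n₃ ≠ -1, and suppose the isotropic image of the tangent planes is the graph of a C¹ function f, i.e. f(n₁/(n₃+1), n₂/(n₃+1)) = -(n₁r₁ + n₂r₂ + n₃r₃)/(n₃+1) along Φ. Then the partial derivatives satisfy f_x(n₁/(n₃+1), n₂/(n₃+1)) = n₁r₃/(n₃+1) - r₁ and f_y(n₁/(n₃+1), n₂/(n₃+1)) = n₂r₃/(n₃+1) - r₂, and consequently the contact point is recovered from f by r(x,y) = 1/(x²+y²+1) · ((x²-y²-1)f_x + 2xy f_y - 2x f, (y²-x²-1)f_y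 + 2xy f_x - 2y f, 2x f_x + 2y f_y - 2f). -/
/-!
Write `t = n₃ + 1` and `g = (n₁ / t, n₂ / t)`. Differentiating the identities `n · n = 1`,
`nᵢ = gᵢ t` and `n · r = -t (f ∘ g)` along a tangent vector, and using `n · dr = 0`, gives
`Df(g) ∘ Dg = L ∘ Dg` for the linear form `L(u, v) = (n₁ r₃ / t - r₁) u + (n₂ r₃ / t - r₂) v`.
As `Dg` is onto, `Df(g) = L`; the formulas for `r` are then algebraic identities modulo `|n| = 1`.
-/

open Filter Topology

/-- `a`, `b`, `u`, `v`, `c` stand for the derivatives of `n`, `r`, `n₁ / t`, `n₂ / t`, `f ∘ g`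
along one tangent vector. -/
lemma isotropic_partial_algebra {n₁ n₂ n₃ r₁ r₂ r₃ a₁ a₂ a₃ b₁ b₂ b₃ u v c : ℝ}
    (hunit : n₁ ^ 2 + n₂ ^ 2 + n₃ ^ 2 = 1) (ht : n₃ + 1 ≠ 0)
    (hunit_deriv : n₁ * a₁ + n₂ * a₂ + n₃ * a₃ = 0) (hnormal : n₁ * b₁ + n₂ * b₂ + n₃ * b₃ = 0)
    (ha₁ : a₁ = n₁ / (n₃ + 1) * a₃ + (n₃ + 1) * u)
    (ha₂ : a₂ = n₂ / (n₃ + 1) * a₃ + (n₃ + 1) * v)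
    (hsupport : n₁ * b₁ + r₁ * a₁ + (n₂ * b₂ + r₂ * a₂) + (n₃ * b₃ + r₃ * a₃)
      = -(-(n₁ * r₁ + n₂ * r₂ + n₃ * r₃) / (n₃ + 1)) * a₃ + (n₃ + 1) * -c) :
    c = (n₁ * r₃ / (n₃ + 1) - r₁) * u + (n₂ * r₃ / (n₃ + 1) - r₂) * v := by
  have ha₃ : a₃ = -(n₃ + 1) * (n₁ * u + n₂ * v) := by
    field_simp at ha₁ ha₂
    apply mul_right_cancel₀ ht
    linear_combination (n₃ + 1) * hunit_deriv - n₁ * ha₁ - n₂ * ha₂ - a₃ * hunit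
  subst ha₁ ha₂ ha₃
  field_simp at hsupport ⊢
  linear_combination hsupport - hnormal

lemma isotropic_reconstruction {n₁ n₂ n₃ r₁ r₂ r₃ x y z fx fy : ℝ}
    (hunit : n₁ ^ 2 + n₂ ^ 2 + n₃ ^ 2 = 1) (ht : n₃ + 1 ≠ 0)
    (hx : x = n₁ / (n₃ + 1)) (hy : y = n₂ / (n₃ + 1))
    (hz : z = -(n₁ * r₁ + n₂ * r₂ + n₃ * r₃) / (n₃ + 1))
    (hfx : fx = n₁ * r₃ / (n₃ + 1) - r₁) (hfy : fy = n₂ * r₃ / (n₃ + 1) - r₂) :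
    r₁ = ((x ^ 2 - y ^ 2 - 1) * fx + 2 * x * y * fy - 2 * x * z) / (x ^ 2 + y ^ 2 + 1) ∧
    r₂ = ((y ^ 2 - x ^ 2 - 1) * fy + 2 * x * y * fx - 2 * y * z) / (x ^ 2 + y ^ 2 + 1) ∧
    r₃ = (2 * x * fx + 2 * y * fy - 2 * z) / (x ^ 2 + y ^ 2 + 1) := by
  have hD : x ^ 2 + y ^ 2 + 1 ≠ 0 := by positivity
  subst hx hy hz hfx hfy
  refine ⟨?_, ?_, ?_⟩ <;> rw [eq_div_iff hD] <;> field_simp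
  · linear_combination (-n₁ * r₃) * hunit
  · linear_combination (-n₂ * r₃) * hunit
  · linear_combination (-r₃) * hunit

section

variable {E : Type*} [NormedAddCommGroup E] [NormedSpace ℝ E] {p : E}

lemma fderiv_apply_of_eventuallyEq_mul {φ ψ χ : E → ℝ} (h : φ =ᶠ[𝓝 p] fun q => ψ q * χ q)
    (hψ : DifferentiableAt ℝ ψ p) (hχ : DifferentiableAt ℝ χ p) (w : E) :
    fderiv ℝ φ p w = ψ p * fderiv ℝ χ p w + χ p * fderiv ℝ ψ p w := by
  rw [h.fderiv_eq, fderiv_fun_mul hψ hχ]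
  rfl

lemma fderiv_dot_apply {a₁ a₂ a₃ b₁ b₂ b₃ : E → ℝ}
    (ha₁ : DifferentiableAt ℝ a₁ p) (ha₂ : DifferentiableAt ℝ a₂ p) (ha₃ : DifferentiableAt ℝ a₃ p)
    (hb₁ : DifferentiableAt ℝ b₁ p) (hb₂ : DifferentiableAt ℝ b₂ p) (hb₃ : DifferentiableAt ℝ b₃ p)
    (w : E) :
    fderiv ℝ (fun q => a₁ q * b₁ q + a₂ q * b₂ q + a₃ q * b₃ q) p w
      = a₁ p * fderiv ℝ b₁ p w + b₁ p * fderiv ℝ a₁ p w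
        + (a₂ p * fderiv ℝ b₂ p w + b₂ p * fderiv ℝ a₂ p w)
        + (a₃ p * fderiv ℝ b₃ p w + b₃ p * fderiv ℝ a₃ p w) := by
  rw [(((ha₁.hasFDerivAt.fun_mul hb₁.hasFDerivAt).fun_add
    (ha₂.hasFDerivAt.fun_mul hb₂.hasFDerivAt)).fun_add (ha₃.hasFDerivAt.fun_mul hb₃.hasFDerivAt)).fderiv]
  rfl

/-- Stereographic projection of the unit normal from the pole `(0, 0, -1)`. -/
noncomputable def isotropicCoords (n₁ n₂ n₃ : E → ℝ) (q : E) : ℝ × ℝ :=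
  (n₁ q / (n₃ q + 1), n₂ q / (n₃ q + 1))

variable {n₁ n₂ n₃ r₁ r₂ r₃ : E → ℝ}

lemma fderiv_comp_isotropicCoords {f : ℝ × ℝ → ℝ}
    (hn₁ : DifferentiableAt ℝ n₁ p) (hn₂ : DifferentiableAt ℝ n₂ p) (hn₃ : DifferentiableAt ℝ n₃ p)
    (hr₁ : DifferentiableAt ℝ r₁ p) (hr₂ : DifferentiableAt ℝ r₂ p) (hr₃ : DifferentiableAt ℝ r₃ p)
    (hf : DifferentiableAt ℝ f (isotropicCoords n₁ n₂ n₃ p))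
    (hunit : ∀ᶠ q in 𝓝 p, n₁ q ^ 2 + n₂ q ^ 2 + n₃ q ^ 2 = 1)
    (hpole : ∀ᶠ q in 𝓝 p, n₃ q + 1 ≠ 0)
    (hnormal : ∀ w : E, n₁ p * fderiv ℝ r₁ p w + n₂ p * fderiv ℝ r₂ p w + n₃ p * fderiv ℝ r₃ p w = 0)
    (hgraph : ∀ᶠ q in 𝓝 p,
      f (isotropicCoords n₁ n₂ n₃ q) = -(n₁ q * r₁ q + n₂ q * r₂ q + n₃ q * r₃ q) / (n₃ q + 1)) :
    fderiv ℝ f (isotropicCoords n₁ n₂ n₃ p) ∘L fderiv ℝ (isotropicCoords n₁ n₂ n₃) p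
      = ((n₁ p * r₃ p / (n₃ p + 1) - r₁ p) • ContinuousLinearMap.fst ℝ ℝ ℝ
          + (n₂ p * r₃ p / (n₃ p + 1) - r₂ p) • ContinuousLinearMap.snd ℝ ℝ ℝ)
        ∘L fderiv ℝ (isotropicCoords n₁ n₂ n₃) p := by
  ext w
  have ht : n₃ p + 1 ≠ 0 := hpole.self_of_nhds
  have hn₃' : DifferentiableAt ℝ (fun q => n₃ q + 1) p := hn₃.add_const 1
  have hg₁ : DifferentiableAt ℝ (fun q => n₁ q / (n₃ q + 1)) p := by fun_prop (disch := exact ht)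
  have hg₂ : DifferentiableAt ℝ (fun q => n₂ q / (n₃ q + 1)) p := by fun_prop (disch := exact ht)
  have hg : fderiv ℝ (isotropicCoords n₁ n₂ n₃) p = (fderiv ℝ _ p).prod (fderiv ℝ _ p) :=
    hg₁.fderiv_prodMk hg₂
  have hunit_deriv : n₁ p * fderiv ℝ n₁ p w + n₂ p * fderiv ℝ n₂ p w + n₃ p * fderiv ℝ n₃ p w = 0 := by
    have hconst : (fun q => n₁ q * n₁ q + n₂ q * n₂ q + n₃ q * n₃ q) =ᶠ[𝓝 p] fun _ => 1 := by
      filter_upwards [hunit] with q hq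
      linear_combination hq
    have := fderiv_dot_apply hn₁ hn₂ hn₃ hn₁ hn₂ hn₃ w
    rw [hconst.fderiv_eq, fderiv_const_apply, zero_apply] at this
    linear_combination -this / 2
  have hquot : ∀ n : E → ℝ, DifferentiableAt ℝ n p → fderiv ℝ n p w
      = n p / (n₃ p + 1) * fderiv ℝ n₃ p w + (n₃ p + 1) * fderiv ℝ (fun q => n q / (n₃ q + 1)) p w :=
    fun n hn => by
      have := fderiv_apply_of_eventuallyEq_mul (by
        filter_upwards [hpole] with q hq using (div_mul_cancel₀ (n q) hq).symm)
        (by fun_prop (disch := exact ht)) hn₃' w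
      rwa [fderiv_add_const] at this
  have hsupport := fderiv_apply_of_eventuallyEq_mul
    (φ := fun q => n₁ q * r₁ q + n₂ q * r₂ q + n₃ q * r₃ q)
    (ψ := fun q => -f (isotropicCoords n₁ n₂ n₃ q)) (χ := fun q => n₃ q + 1)
    (by filter_upwards [hgraph, hpole] with q hq hq' using by
          rw [hq, neg_div, neg_neg, div_mul_cancel₀ _ hq'])
    (hf.comp p (hg₁.prodMk hg₂)).neg hn₃' w
  rw [fderiv_dot_apply hn₁ hn₂ hn₃ hr₁ hr₂ hr₃, fderiv_add_const, fderiv_fun_neg,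
    fderiv_fun_comp p hf (hg₁.prodMk hg₂), neg_apply, ContinuousLinearMap.comp_apply,
    hgraph.self_of_nhds] at hsupport
  refine isotropic_partial_algebra hunit.self_of_nhds ht hunit_deriv (hnormal w) ?_ ?_ hsupport
  · rw [hg]
    exact hquot n₁ hn₁
  · rw [hg]
    exact hquot n₂ hn₂

end

/-- reconstruction of the contact point from the isotropic image.
If the isotropic images of the tangent planes of a parametrized surface form the graph
of a `C¹` function `f`, then the partial derivatives of `f` recover the surface point. -/
theorem stmt_16 (U V : Set (ℝ × ℝ)) (hU : IsOpen U) (hV : IsOpen V)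
    (r₁ r₂ r₃ n₁ n₂ n₃ : ℝ × ℝ → ℝ) (f : ℝ × ℝ → ℝ)
    (hr₁ : ContDiffOn ℝ 1 r₁ U) (hr₂ : ContDiffOn ℝ 1 r₂ U) (hr₃ : ContDiffOn ℝ 1 r₃ U)
    (hn₁ : ContDiffOn ℝ 1 n₁ U) (hn₂ : ContDiffOn ℝ 1 n₂ U) (hn₃ : ContDiffOn ℝ 1 n₃ U)
    (hunit : ∀ p ∈ U, (n₁ p) ^ 2 + (n₂ p) ^ 2 + (n₃ p) ^ 2 = 1)
    (hpole : ∀ p ∈ U, n₃ p ≠ -1)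
    (hnormal : ∀ p ∈ U, ∀ w : ℝ × ℝ,
      n₁ p * fderiv ℝ r₁ p w + n₂ p * fderiv ℝ r₂ p w + n₃ p * fderiv ℝ r₃ p w = 0)
    (hmaps : ∀ p ∈ U, ((n₁ p / (n₃ p + 1), n₂ p / (n₃ p + 1)) : ℝ × ℝ) ∈ V)
    (hdiffeo : ∀ p ∈ U, Function.Bijective
      (fderiv ℝ (fun q : ℝ × ℝ => ((n₁ q / (n₃ q + 1), n₂ q / (n₃ q + 1)) : ℝ × ℝ)) p))
    (hf : ContDiffOn ℝ 1 f V)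
    (hgraph : ∀ p ∈ U,
      f (n₁ p / (n₃ p + 1), n₂ p / (n₃ p + 1))
        = -(n₁ p * r₁ p + n₂ p * r₂ p + n₃ p * r₃ p) / (n₃ p + 1)) :
    ∀ p ∈ U, ∀ x y : ℝ, x = n₁ p / (n₃ p + 1) → y = n₂ p / (n₃ p + 1) →
      fderiv ℝ f (x, y) (1, 0) = n₁ p * r₃ p / (n₃ p + 1) - r₁ p ∧
      fderiv ℝ f (x, y) (0, 1) = n₂ p * r₃ p / (n₃ p + 1) - r₂ p ∧
      r₁ p = ((x ^ 2 - y ^ 2 - 1) * fderiv ℝ f (x, y) (1, 0)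
          + 2 * x * y * fderiv ℝ f (x, y) (0, 1) - 2 * x * f (x, y)) / (x ^ 2 + y ^ 2 + 1) ∧
      r₂ p = ((y ^ 2 - x ^ 2 - 1) * fderiv ℝ f (x, y) (0, 1)
          + 2 * x * y * fderiv ℝ f (x, y) (1, 0) - 2 * y * f (x, y)) / (x ^ 2 + y ^ 2 + 1) ∧
      r₃ p = (2 * x * fderiv ℝ f (x, y) (1, 0) + 2 * y * fderiv ℝ f (x, y) (0, 1)
          - 2 * f (x, y)) / (x ^ 2 + y ^ 2 + 1) := by
  intro p hp x y hx hy
  have hmem : U ∈ 𝓝 p := hU.mem_nhds hp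
  have hdiff : ∀ {φ : ℝ × ℝ → ℝ}, ContDiffOn ℝ 1 φ U → DifferentiableAt ℝ φ p :=
    fun h => (h.contDiffAt hmem).differentiableAt one_ne_zero
  have ht : ∀ q ∈ U, n₃ q + 1 ≠ 0 := fun q hq h => hpole q hq (eq_neg_of_add_eq_zero_left h)
  have hcomp := fderiv_comp_isotropicCoords (hdiff hn₁) (hdiff hn₂) (hdiff hn₃)
    (hdiff hr₁) (hdiff hr₂) (hdiff hr₃)
    ((hf.contDiffAt (hV.mem_nhds (hmaps p hp))).differentiableAt one_ne_zero)
    (eventually_of_mem hmem hunit) (eventually_of_mem hmem ht) (hnormal p hp)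
    (eventually_of_mem hmem hgraph)
  have hF : fderiv ℝ f (x, y) = (n₁ p * r₃ p / (n₃ p + 1) - r₁ p) • ContinuousLinearMap.fst ℝ ℝ ℝ
      + (n₂ p * r₃ p / (n₃ p + 1) - r₂ p) • ContinuousLinearMap.snd ℝ ℝ ℝ := by
    subst hx hy
    exact ContinuousLinearMap.ext ((hdiffeo p hp).2.forall.2 fun w => congr($hcomp w))
  have hfx : fderiv ℝ f (x, y) (1, 0) = n₁ p * r₃ p / (n₃ p + 1) - r₁ p := by simp [hF]
  have hfy : fderiv ℝ f (x, y) (0, 1) = n₂ p * r₃ p / (n₃ p + 1) - r₂ p := by simp [hF]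
  exact ⟨hfx, hfy, isotropic_reconstruction (hunit p hp) (ht p hp) hx hy (hx ▸ hy ▸ hgraph p hp)
    hfx hfy⟩
end

section
/- Consider the conic t ↦ (x + v sin t + u(1-cos t), y - u sin t + v(1-cos t), z + a sin t + b(1-cos t)) with a, b, z given by z = f(x,y), a = f_x v - f_y u, b = f_x u + f_y v + f_xx v² - 2 f_xy uv + f_yy u² for a C² function f and (u,v) ≠ (0,0) with x² + y² + 1 + 2xu + 2yv = 0. Then the plane containing the conic passes through the point (0,0,R) if and only if 2(u²+v²)(f - x f_x - y f_y - R) + (x²+y²+1)(f_xx v² - 2 f_xy uv + f_yy u²) = 0. -/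
/-!
The conic lies in the plane `Z = A X + B Y + R` exactly when its constant, `sin t` and
`1 - cos t` coefficients match. Since `(v, -u)` and `(u, v)` form a basis of `ℝ²` when
`(u, v) ≠ 0`, the slopes `A, B` are then determined by `a, b`, and what remains is that the
point `(x, y, z)` of the conic (at `t = 0`) satisfies the plane equation. The top view
condition rewrites `x u + y v` as `-(x² + y² + 1) / 2`.
-/

open Real Set

lemma forall_add_mul_sin_add_mul_one_sub_cos_eq_zero_iff {c₀ c₁ c₂ : ℝ} :
    (∀ t : ℝ, c₀ + c₁ * sin t + c₂ * (1 - cos t) = 0) ↔ c₀ = 0 ∧ c₁ = 0 ∧ c₂ = 0 := by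
  refine ⟨fun h => ?_, fun ⟨h₀, h₁, h₂⟩ t => by simp [h₀, h₁, h₂]⟩
  have h0 := h 0
  have hp := h (π / 2)
  have hm := h (-(π / 2))
  simp only [sin_zero, cos_zero, sin_pi_div_two, cos_pi_div_two, sin_neg, cos_neg] at h0 hp hm
  exact ⟨by linarith, by linarith, by linarith⟩

lemma conic_in_plane_through_iff {x y z a b u v R : ℝ} (huv : u ^ 2 + v ^ 2 ≠ 0) :
    (∃ A B : ℝ, ∀ t : ℝ,
        z + a * sin t + b * (1 - cos t)
          = A * (x + v * sin t + u * (1 - cos t)) + B * (y - u * sin t + v * (1 - cos t)) + R)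
      ↔ (u ^ 2 + v ^ 2) * (z - R) = (a * v + b * u) * x + (b * v - a * u) * y := by
  have coeffs : ∀ A B : ℝ, (∀ t : ℝ,
      z + a * sin t + b * (1 - cos t)
        = A * (x + v * sin t + u * (1 - cos t)) + B * (y - u * sin t + v * (1 - cos t)) + R)
      ↔ z - A * x - B * y - R = 0 ∧ a - A * v + B * u = 0 ∧ b - A * u - B * v = 0 := by
    intro A B
    rw [← forall_add_mul_sin_add_mul_one_sub_cos_eq_zero_iff]
    exact forall_congr' fun t => by constructor <;> intro h <;> linear_combination h
  simp only [coeffs]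
  constructor
  · rintro ⟨A, B, hz, ha, hb⟩
    linear_combination (u ^ 2 + v ^ 2) * hz + (u * y - v * x) * ha - (u * x + v * y) * hb
  · intro h
    refine ⟨(a * v + b * u) / (u ^ 2 + v ^ 2), (b * v - a * u) / (u ^ 2 + v ^ 2), ?_, ?_, ?_⟩
    · field_simp
      linear_combination h
    · field_simp
      ring
    · field_simp
      ring

theorem stmt_17_general (f : ℝ → ℝ → ℝ) (x y z a b u v R : ℝ)
    (huv : (u, v) ≠ ((0 : ℝ), (0 : ℝ)))
    (htop : x ^ 2 + y ^ 2 + 1 + 2 * x * u + 2 * y * v = 0)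
    (hz : z = f x y)
    (ha : a = pdx f x y * v - pdy f x y * u)
    (hb : b = pdx f x y * u + pdy f x y * v
        + pdx (pdx f) x y * v ^ 2 - 2 * pdy (pdx f) x y * u * v + pdy (pdy f) x y * u ^ 2) :
    (∃ A B : ℝ, ∀ t : ℝ,
        z + a * Real.sin t + b * (1 - Real.cos t)
          = A * (x + v * Real.sin t + u * (1 - Real.cos t))
            + B * (y - u * Real.sin t + v * (1 - Real.cos t)) + R)
    ↔ 2 * (u ^ 2 + v ^ 2) * (f x y - x * pdx f x y - y * pdy f x y - R)
        + (x ^ 2 + y ^ 2 + 1)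
          * (pdx (pdx f) x y * v ^ 2 - 2 * pdy (pdx f) x y * u * v
              + pdy (pdy f) x y * u ^ 2) = 0 := by
  have hs : u ^ 2 + v ^ 2 ≠ 0 := by
    simpa [sq, mul_self_add_mul_self_eq_zero] using huv
  rw [conic_in_plane_through_iff hs, hz, ha, hb]
  set W := pdx (pdx f) x y * v ^ 2 - 2 * pdy (pdx f) x y * u * v + pdy (pdy f) x y * u ^ 2
  constructor <;> intro h
  · linear_combination 2 * h + W * htop
  · linear_combination h / 2 - W / 2 * htop

/-- for the osculating conic with `z, a, b` given by the osculation
formulas and top view condition `x² + y² + 1 + 2xu + 2yv = 0`, the plane of the conic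
passes through `(0,0,R)` iff
`2(u²+v²)(f - x f_x - y f_y - R) + (x²+y²+1)(f_xx v² - 2 f_xy uv + f_yy u²) = 0`. -/
theorem stmt_17 (f : ℝ → ℝ → ℝ) (x y z a b u v R : ℝ)
    (hf : ContDiffAt ℝ 2 (fun p : ℝ × ℝ => f p.1 p.2) (x, y))
    (huv : (u, v) ≠ ((0 : ℝ), (0 : ℝ)))
    (htop : x ^ 2 + y ^ 2 + 1 + 2 * x * u + 2 * y * v = 0)
    (hz : z = f x y)
    (ha : a = pdx f x y * v - pdy f x y * u)
    (hb : b = pdx f x y * u + pdy f x y * v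
        + pdx (pdx f) x y * v ^ 2 - 2 * pdy (pdx f) x y * u * v + pdy (pdy f) x y * u ^ 2) :
    (∃ A B : ℝ, ∀ t : ℝ,
        z + a * Real.sin t + b * (1 - Real.cos t)
          = A * (x + v * Real.sin t + u * (1 - Real.cos t))
            + B * (y - u * Real.sin t + v * (1 - Real.cos t)) + R)
    ↔ 2 * (u ^ 2 + v ^ 2) * (f x y - x * pdx f x y - y * pdy f x y - R)
        + (x ^ 2 + y ^ 2 + 1)
          * (pdx (pdx f) x y * v ^ 2 - 2 * pdy (pdx f) x y * u * v
              + pdy (pdy f) x y * u ^ 2) = 0 :=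
  stmt_17_general f x y z a b u v R huv htop hz ha hb
end

section
/- For the function f(x,y) = y²/(x²+y²) defined on ℝ² \ {(0,0)}, and for each point (x,y) ≠ (0,0), the curve t ↦ (x(t), y(t), z(t)) with x(t) = x + v sin t + u(1-cos t), y(t) = y - u sin t + v(1-cos t), z(t) = z + a sin t + b(1-cos t), where u = -x/2, v = -y/2, z = y²/(x²+y²), a = xy/(x²+y²), b = (x²-y²)/(2(x²+y²)), is contained in the graph of f for all t such that (x(t), y(t)) ≠ (0,0), i.e., z(t) = f(x(t), y(t)). -/
open Real

/-! In complex notation the curve is `W = w (1 + e^{it}) / 2` with `w = x + iy`, so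
`|W|² = |w|² (1 + cos t) / 2`. Using `sin² t = (1 - cos t)(1 + cos t)`, also
`Y² = (1 + cos t) / 2 · |w|² Z`; the common factor cancels in `Y² / (X² + Y²)`. -/

lemma sq_add_sq_ne_zero_of_ne {X Y : ℝ} (h : (X, Y) ≠ (0, 0)) : X ^ 2 + Y ^ 2 ≠ 0 := by
  rw [sq, sq, Ne, mul_self_add_mul_self_eq_zero]
  rintro ⟨rfl, rfl⟩
  exact h rfl

lemma conic_sq_add_sq (x y t : ℝ) :
    (x + (-y / 2) * sin t + (-x / 2) * (1 - cos t)) ^ 2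
      + (y - (-x / 2) * sin t + (-y / 2) * (1 - cos t)) ^ 2
      = (x ^ 2 + y ^ 2) * (1 + cos t) / 2 := by
  linear_combination (x ^ 2 + y ^ 2) / 4 * sin_sq_add_cos_sq t

lemma conic_snd_sq (x y t : ℝ) :
    (y - (-x / 2) * sin t + (-y / 2) * (1 - cos t)) ^ 2
      = (1 + cos t) / 2 * (y ^ 2 + x * y * sin t + (x ^ 2 - y ^ 2) / 2 * (1 - cos t)) := by
  linear_combination x ^ 2 / 4 * sin_sq_add_cos_sq t

theorem stmt_19_general (x y t : ℝ) :
    ∀ X Y Z : ℝ,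
      X = x + (-y / 2) * Real.sin t + (-x / 2) * (1 - Real.cos t) →
      Y = y - (-x / 2) * Real.sin t + (-y / 2) * (1 - Real.cos t) →
      Z = y ^ 2 / (x ^ 2 + y ^ 2) + (x * y / (x ^ 2 + y ^ 2)) * Real.sin t
          + ((x ^ 2 - y ^ 2) / (2 * (x ^ 2 + y ^ 2))) * (1 - Real.cos t) →
      (X, Y) ≠ ((0 : ℝ), (0 : ℝ)) →
      Z = Y ^ 2 / (X ^ 2 + Y ^ 2) := by
  intro X Y Z hX hY hZ hXY
  have hXY' := sq_add_sq_ne_zero_of_ne hXY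
  subst hX hY hZ
  rw [conic_sq_add_sq] at hXY' ⊢
  have hw : x ^ 2 + y ^ 2 ≠ 0 := left_ne_zero_of_mul (div_ne_zero_iff.mp hXY').1
  rw [eq_div_iff hXY', conic_snd_sq]
  field_simp

/-- for `f(x,y) = y²/(x²+y²)`, the explicit conics with
`u = -x/2`, `v = -y/2`, `z = y²/(x²+y²)`, `a = xy/(x²+y²)`, `b = (x²-y²)/(2(x²+y²))`
are contained in the graph of `f` wherever defined. -/
theorem stmt_19 (x y t : ℝ) (hxy : (x, y) ≠ ((0 : ℝ), (0 : ℝ))) :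
    ∀ X Y Z : ℝ,
      X = x + (-y / 2) * Real.sin t + (-x / 2) * (1 - Real.cos t) →
      Y = y - (-x / 2) * Real.sin t + (-y / 2) * (1 - Real.cos t) →
      Z = y ^ 2 / (x ^ 2 + y ^ 2) + (x * y / (x ^ 2 + y ^ 2)) * Real.sin t
          + ((x ^ 2 - y ^ 2) / (2 * (x ^ 2 + y ^ 2))) * (1 - Real.cos t) →
      (X, Y) ≠ ((0 : ℝ), (0 : ℝ)) →
      Z = Y ^ 2 / (X ^ 2 + Y ^ 2) :=
  stmt_19_general x y t
end
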